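/- arXiv:2504.05798 — 10 statements merged into one kernel-verified Lean document; each statement's English description precedes it below -/
import Mathlib

section
/- Let E be a real normed vector space, h > 0, and let t_k = k·h for integers k. Let 0 ≤ k̲ < k̄ and let x* : [t_k̲, t_k̄] → E be p-times differentiable with 1 ≤ p ≤ k̄ − k̲, and set σ_p := sup_{t ∈ [t_k̲, t_k̄]} ‖(x*)^{(p)}(t)‖. Then for every integer k with k̲ + p ≤ k ≤ k̄, one has ‖x*(t_k) − Σ_{i=1}^{p} (−1)^{i−1} binom(p,i) x*(t_{k−i})‖ ≤ h^p · σ_p. -/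
/-!
The extrapolation error is the `p`-th forward difference `Δₕᵖ x*` evaluated at `t_{k-p}`.
Forward differences commute with differentiation, so `(Δₕʲ x*^{(i)})' = Δₕʲ x*^{(i+1)}` on the
part of the interval where the shifted points stay inside it, and the mean value theorem gives
`‖Δₕ g (t)‖ ≤ h · sup ‖g'‖` on `[t, t + h]`. Peeling off one difference and one derivative at a
time yields `‖Δₕᵖ x*‖ ≤ hᵖ σₚ`.
-/

section

open Set
open scoped fwdDiff

variable {E : Type*} [NormedAddCommGroup E] [NormedSpace ℝ E]

theorem hasDerivWithinAt_fwdDiff {f f' : ℝ → E} {h a b : ℝ} (hh : 0 ≤ h)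
    (hf : ∀ t ∈ Icc a b, HasDerivWithinAt f (f' t) (Icc a b) t) :
    ∀ t ∈ Icc a (b - h), HasDerivWithinAt (Δ_[h] f) (Δ_[h] f' t) (Icc a (b - h)) t := by
  intro t ⟨hat, htb⟩
  have hshift : HasDerivWithinAt (fun u ↦ f (u + h)) (f' (t + h)) (Icc a (b - h)) t := by
    have hmaps : MapsTo (· + h) (Icc a (b - h)) (Icc a b) :=
      fun u ⟨hau, hub⟩ ↦ ⟨by linarith, by linarith⟩
    simpa [Function.comp_def] using (hf (t + h) ⟨by linarith, by linarith⟩).scomp t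
      ((hasDerivWithinAt_id t _).add_const h) hmaps
  have hbase : HasDerivWithinAt f (f' t) (Icc a (b - h)) t :=
    (hf t ⟨hat, by linarith⟩).mono (Icc_subset_Icc_right (by linarith))
  exact hshift.sub hbase

theorem hasDerivWithinAt_fwdDiff_iter {f f' : ℝ → E} {h a b : ℝ} (hh : 0 ≤ h)
    (hf : ∀ t ∈ Icc a b, HasDerivWithinAt f (f' t) (Icc a b) t) (m : ℕ) :
    ∀ t ∈ Icc a (b - m * h),
      HasDerivWithinAt ((Δ_[h])^[m] f) ((Δ_[h])^[m] f' t) (Icc a (b - m * h)) t := by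
  induction m generalizing f f' b with
  | zero => simpa using hf
  | succ m ih =>
    have hb : b - ((m + 1 : ℕ) : ℝ) * h = b - h - m * h := by push_cast; ring
    simpa only [Function.iterate_succ_apply, hb] using ih (hasDerivWithinAt_fwdDiff hh hf)

theorem norm_fwdDiff_le_of_norm_hasDerivWithinAt_le {f f' : ℝ → E} {s : Set ℝ} {h t C : ℝ}
    (hs : Convex ℝ s) (ht : t ∈ s) (hth : t + h ∈ s)
    (hf : ∀ u ∈ s, HasDerivWithinAt f (f' u) s u) (hC : ∀ u ∈ s, ‖f' u‖ ≤ C) :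
    ‖Δ_[h] f t‖ ≤ C * |h| := by
  simpa [fwdDiff] using hs.norm_image_sub_le_of_norm_hasDerivWithin_le hf hC ht hth

theorem norm_fwdDiff_iter_le {d : ℕ → ℝ → E} {h a b σ : ℝ} (hh : 0 ≤ h) (p : ℕ)
    (hd : ∀ i < p, ∀ t ∈ Icc a b, HasDerivWithinAt (d i) (d (i + 1) t) (Icc a b) t)
    (hσ : ∀ t ∈ Icc a b, ‖d p t‖ ≤ σ) :
    ∀ t ∈ Icc a (b - p * h), ‖(Δ_[h])^[p] (d 0) t‖ ≤ h ^ p * σ := by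
  induction p generalizing d with
  | zero => simpa using hσ
  | succ p ih =>
    intro t ⟨hat, htb⟩
    have hbound := ih (d := fun i ↦ d (i + 1)) (fun i hi ↦ hd (i + 1) (by omega)) hσ
    have hderiv := hasDerivWithinAt_fwdDiff_iter hh (hd 0 p.succ_pos) p
    push_cast at htb
    rw [Function.iterate_succ_apply']
    calc ‖Δ_[h] ((Δ_[h])^[p] (d 0)) t‖ ≤ h ^ p * σ * |h| :=
          norm_fwdDiff_le_of_norm_hasDerivWithinAt_le (convex_Icc _ _)
            ⟨hat, by nlinarith⟩ ⟨by linarith, by linarith⟩ hderiv hbound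
      _ = h ^ (p + 1) * σ := by rw [abs_of_nonneg hh]; ring

theorem fwdDiff_iter_eq_sub_sum (f : ℝ → E) (h : ℝ) (p : ℕ) (k : ℤ) :
    (Δ_[h])^[p] f ((k - p) * h) = f (k * h) - ∑ i ∈ Finset.Icc 1 p,
      ((-1 : ℝ) ^ (i - 1) * (p.choose i : ℝ)) • f (((k - i : ℤ) : ℝ) * h) := by
  set g : ℕ → E := fun i ↦ ((-1 : ℝ) ^ i * (p.choose i : ℝ)) • f (((k - i : ℤ) : ℝ) * h)
  have hreflect : (Δ_[h])^[p] f ((k - p) * h) = ∑ i ∈ Finset.range (p + 1), g i := by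
    rw [fwdDiff_iter_eq_sum_shift, ← Finset.sum_range_reflect]
    refine Finset.sum_congr rfl fun i hi ↦ ?_
    have hip : i ≤ p := Nat.lt_succ_iff.mp (Finset.mem_range.mp hi)
    rw [show p + 1 - 1 - i = p - i by omega, Nat.sub_sub_self hip, Nat.choose_symm hip,
      nsmul_eq_mul, Nat.cast_sub hip, ← Int.cast_smul_eq_zsmul ℝ]
    simp only [g]
    push_cast
    ring_nf
  have htail : ∑ i ∈ Finset.Icc 1 p,
      ((-1 : ℝ) ^ (i - 1) * (p.choose i : ℝ)) • f (((k - i : ℤ) : ℝ) * h) =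
        -∑ i ∈ Finset.Icc 1 p, g i := by
    rw [← Finset.sum_neg_distrib]
    refine Finset.sum_congr rfl fun i hi ↦ ?_
    obtain ⟨j, rfl⟩ := Nat.exists_eq_add_of_le' (Finset.mem_Icc.mp hi).1
    simp [g, pow_succ]
  rw [hreflect, htail, Finset.range_eq_Ico, Finset.sum_eq_sum_Ico_succ_bot (by omega : 0 < p + 1),
    zero_add, Finset.Ico_add_one_right_eq_Icc]
  simp [g]

end

theorem sharp_lagrange_extrapolation_error_general
    {E : Type*} [NormedAddCommGroup E] [NormedSpace ℝ E]
    (h : ℝ) (hh : 0 < h)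
    (kl kb : ℤ)
    (p : ℕ)
    (xs : ℝ → E) (d : ℕ → ℝ → E)
    (hd0 : d 0 = xs)
    (hderiv : ∀ i < p, ∀ t ∈ Set.Icc ((kl : ℝ) * h) ((kb : ℝ) * h),
      HasDerivWithinAt (d i) (d (i + 1) t) (Set.Icc ((kl : ℝ) * h) ((kb : ℝ) * h)) t)
    (σp : ℝ)
    (hσ : ∀ t ∈ Set.Icc ((kl : ℝ) * h) ((kb : ℝ) * h), ‖d p t‖ ≤ σp)
    (k : ℤ) (hk1 : kl + p ≤ k) (hk2 : k ≤ kb) :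
    ‖xs ((k : ℝ) * h) - ∑ i ∈ Finset.Icc 1 p,
        ((-1 : ℝ) ^ (i - 1) * (p.choose i : ℝ)) • xs (((k - i : ℤ) : ℝ) * h)‖
      ≤ h ^ p * σp := by
  subst hd0
  have ht : ((k : ℝ) - p) * h ∈ Set.Icc ((kl : ℝ) * h) ((kb : ℝ) * h - p * h) := by
    have hk1' : (kl : ℝ) + p ≤ k := by exact_mod_cast hk1
    have hk2' : (k : ℝ) ≤ kb := by exact_mod_cast hk2
    constructor <;> nlinarith
  rw [← fwdDiff_iter_eq_sub_sum]
  exact norm_fwdDiff_iter_le hh.le p hderiv hσ _ ht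

/-- Lagrange-extrapolation error bound: if `x*` is `p`-times differentiable on
`[t_k̲, t_k̄]` with `p`-th derivative bounded by `σp`, then the extrapolation of
`x*(t_k)` from the `p` previous sample points has error at most `h^p · σp`. -/
theorem sharp_lagrange_extrapolation_error
    {E : Type*} [NormedAddCommGroup E] [NormedSpace ℝ E]
    (h : ℝ) (hh : 0 < h)
    (kl kb : ℤ) (hkl : 0 ≤ kl) (hklkb : kl < kb)
    (p : ℕ) (hp : 1 ≤ p) (hpk : (p : ℤ) ≤ kb - kl)
    (xs : ℝ → E) (d : ℕ → ℝ → E)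
    (hd0 : d 0 = xs)
    (hderiv : ∀ i < p, ∀ t ∈ Set.Icc ((kl : ℝ) * h) ((kb : ℝ) * h),
      HasDerivWithinAt (d i) (d (i + 1) t) (Set.Icc ((kl : ℝ) * h) ((kb : ℝ) * h)) t)
    (σp : ℝ)
    (hσ : ∀ t ∈ Set.Icc ((kl : ℝ) * h) ((kb : ℝ) * h), ‖d p t‖ ≤ σp)
    (k : ℤ) (hk1 : kl + p ≤ k) (hk2 : k ≤ kb) :
    ‖xs ((k : ℝ) * h) - ∑ i ∈ Finset.Icc 1 p,
        ((-1 : ℝ) ^ (i - 1) * (p.choose i : ℝ)) • xs (((k - i : ℤ) : ℝ) * h)‖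
      ≤ h ^ p * σp :=
  sharp_lagrange_extrapolation_error_general h hh kl kb p xs d hd0 hderiv σp hσ k hk1 hk2
end

section
/- Let E be a real normed vector space (e.g., a Banach space), let p ≥ 1 be an integer, and let φ : ℝ → E be p-times continuously differentiable. Then ∫_{[0,1]^p} φ^{(p)}(s_1 + s_2 + ⋯ + s_p) ds = Σ_{i=0}^{p} (−1)^{p−i} binom(p,i) φ(i), where the integral is over the unit cube [0,1]^p with respect to Lebesgue measure. -/
/-! Integrating `φ^{(p+1)}(x + t + s₁ + ⋯ + s_p)` first in `t` over `[0,1]` gives, by the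
fundamental theorem of calculus, the forward difference in `x` of `φ^{(p)}(x + s₁ + ⋯ + s_p)`.
So by Fubini and induction on `p`, the cube integral of `φ^{(p)}(x + ∑ sᵢ)` is `Δ^p φ (x)`,
and the binomial expansion of `Δ^p = (shift - 1)^p` at `x = 0` gives the stated sum. -/

open MeasureTheory Set

section

variable {E : Type*} [NormedAddCommGroup E] [NormedSpace ℝ E]

theorem setIntegral_Icc_zero_one_deriv_comp_add [CompleteSpace E] {g : ℝ → E}
    (hg : ContDiff ℝ 1 g) (c : ℝ) :
    ∫ t in Icc (0 : ℝ) 1, deriv g (t + c) = g (1 + c) - g c := by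
  rw [integral_Icc_eq_integral_Ioc, ← intervalIntegral.integral_of_le zero_le_one,
    intervalIntegral.integral_comp_add_right (deriv g) c, zero_add,
    intervalIntegral.integral_deriv_eq_sub
      (fun u _ => (hg.differentiable one_ne_zero).differentiableAt)
      ((hg.continuous_deriv le_rfl).intervalIntegrable _ _)]

theorem setIntegral_Icc_fin_succ {n : ℕ} {a b : Fin (n + 1) → ℝ} {f : (Fin (n + 1) → ℝ) → E}
    (hf : IntegrableOn f (Icc a b)) :
    ∫ y in Icc a b, f y =
      ∫ s in Icc (Fin.tail a) (Fin.tail b), ∫ t in Icc (a 0) (b 0), f (Fin.cons t s) := by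
  have hmp := (volume_preserving_piFinSuccAbove (fun _ : Fin (n + 1) => ℝ) 0).symm
  have hpre : (MeasurableEquiv.piFinSuccAbove (fun _ => ℝ) 0).symm ⁻¹' Icc a b
      = Icc (a 0) (b 0) ×ˢ Icc (Fin.tail a) (Fin.tail b) := by
    ext ⟨t, s⟩
    simp only [mem_preimage, mem_Icc, mem_prod, Pi.le_def,
      MeasurableEquiv.piFinSuccAbove_symm_apply, Fin.insertNthEquiv, Equiv.coe_fn_mk,
      Fin.insertNth_zero, Fin.forall_fin_succ, Fin.cons_zero, Fin.cons_succ, Fin.tail]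
    tauto
  have hf' := hmp.integrableOn_comp_preimage (MeasurableEquiv.measurableEmbedding _) |>.mpr hf
  rw [hpre, Measure.volume_eq_prod] at hf'
  rw [← hmp.setIntegral_preimage_emb (MeasurableEquiv.measurableEmbedding _), hpre,
    Measure.volume_eq_prod, ← setIntegral_prod_swap]
  refine (setIntegral_prod _ hf'.swap).trans ?_
  simp [MeasurableEquiv.piFinSuccAbove_symm_apply, Fin.insertNthEquiv, Fin.insertNth_zero']

theorem setIntegral_Icc_zero_one_iteratedDeriv_add_sum [CompleteSpace E] (p : ℕ) {ψ : ℝ → E}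
    (hψ : ContDiff ℝ p ψ) (x : ℝ) :
    ∫ s : Fin p → ℝ in Icc 0 1, iteratedDeriv p ψ (x + ∑ i, s i) = (fwdDiff 1)^[p] ψ x := by
  induction p generalizing x with
  | zero => simp [measureReal_def, Real.volume_Icc_pi]
  | succ p ih =>
    have hC1 : ContDiff ℝ 1 (iteratedDeriv p ψ) := by
      rw [iteratedDeriv_eq_iterate]
      exact ContDiff.iterate_deriv' 1 p (by rwa [add_comm] at hψ)
    have hint : IntegrableOn (fun y : Fin (p + 1) → ℝ => iteratedDeriv (p + 1) ψ (x + ∑ i, y i))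
        (Icc 0 1) :=
      ((hψ.continuous_iteratedDeriv _ le_rfl).comp (by fun_prop)).integrableOn_Icc
    calc ∫ y : Fin (p + 1) → ℝ in Icc 0 1, iteratedDeriv (p + 1) ψ (x + ∑ i, y i)
        = ∫ s in Icc (0 : Fin p → ℝ) 1, ∫ t in Icc (0 : ℝ) 1,
            deriv (iteratedDeriv p ψ) (t + (x + ∑ i, s i)) := by
          rw [setIntegral_Icc_fin_succ hint]
          simp_rw [Fin.sum_cons, iteratedDeriv_succ, add_left_comm x]
          rfl
      _ = ∫ s in Icc (0 : Fin p → ℝ) 1,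
            (iteratedDeriv p ψ (x + 1 + ∑ i, s i) - iteratedDeriv p ψ (x + ∑ i, s i)) := by
          simp_rw [setIntegral_Icc_zero_one_deriv_comp_add hC1, ← add_assoc, add_comm 1 x]
      _ = (fwdDiff 1)^[p + 1] ψ x := by
          have hψp : ContDiff ℝ p ψ := hψ.of_le (by norm_cast; omega)
          rw [integral_sub, ih hψp, ih hψp, Function.iterate_succ_apply', fwdDiff]
          all_goals exact (hC1.continuous.comp (by fun_prop)).integrableOn_Icc

end

theorem finite_difference_integral_identity_general
    {E : Type*} [NormedAddCommGroup E] [NormedSpace ℝ E] [CompleteSpace E]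
    (p : ℕ) (φ : ℝ → E) (hφ : ContDiff ℝ (p : ℕ∞) φ) :
    ∫ s : Fin p → ℝ in Set.Icc 0 1, iteratedDeriv p φ (∑ i, s i)
      = ∑ i ∈ Finset.range (p + 1),
          ((-1 : ℝ) ^ (p - i) * (p.choose i : ℝ)) • φ (i : ℝ) := by
  have h := setIntegral_Icc_zero_one_iteratedDeriv_add_sum p hφ 0
  simp only [zero_add] at h
  rw [h, fwdDiff_iter_eq_sum_shift]
  simp [← Int.cast_smul_eq_zsmul ℝ]

/-- The `p`-th forward finite difference of a `C^p` curve `φ` at the integer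
points `0, 1, …, p` equals the integral of the `p`-th derivative over the unit
cube `[0,1]^p`. -/
theorem finite_difference_integral_identity
    {E : Type*} [NormedAddCommGroup E] [NormedSpace ℝ E] [CompleteSpace E]
    (p : ℕ) (hp : 1 ≤ p) (φ : ℝ → E) (hφ : ContDiff ℝ (p : ℕ∞) φ) :
    ∫ s : Fin p → ℝ in Set.Icc 0 1, iteratedDeriv p φ (∑ i, s i)
      = ∑ i ∈ Finset.range (p + 1),
          ((-1 : ℝ) ^ (p - i) * (p.choose i : ℝ)) • φ (i : ℝ) :=
  finite_difference_integral_identity_general p φ hφ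
end

section
/- Let E be a real normed vector space, h > 0, t_k = k·h, and let integers k0 < k̄ be given. Let x* : ℝ → E be differentiable with ‖(x*)'(t)‖ ≤ σ1 for all t ∈ [t_{k0}, t_{k̄}]. Let v ≥ 0, r > 0, and γ ∈ [0,1) satisfy γ ≤ 1 − (v + σ1)h/r, and assume (v + σ1)h ≤ r. Let x̂_k, x_k ∈ E (for k0 ≤ k ≤ k̄) satisfy: (a) ‖x̂_k − x_{k−1}‖ ≤ v·h for all k0 + 1 ≤ k ≤ k̄ (acceptance condition); (b) for every k0 ≤ k ≤ k̄, if ‖x̂_k − x*(t_k)‖ ≤ r then ‖x_k − x*(t_k)‖ ≤ γ·‖x̂_k − x*(t_k)‖ (correction contraction); (c) ‖x̂_{k0} − x*(t_{k0})‖ ≤ r and ‖x_{k0} − x*(t_{k0})‖ ≤ r − (v + σ1)h. Define e_k := ‖x̂_k − x*(t_k)‖. Then e_k ≤ r for all k0 + 1 ≤ k ≤ k̄, and e_k ≤ (v + σ1)h/(1 − γ) + e_{k0}·γ^{k − k0} for all k0 ≤ k ≤ k̄. -/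
/-!
The acceptance test moves the prediction at most `v h` away from the previous correction, and the
target moves at most `σ1 h` between samples (mean value theorem), so
`e_{k+1} ≤ (v + σ1) h + ‖x_k − x*(t_k)‖`. As long as `e_k ≤ r` the correction contracts, giving
`e_{k+1} ≤ (v + σ1) h + γ e_k`; the condition on `γ` makes the right-hand side at most `r` again, so
the contraction region is never left. Unrolling the affine recursion gives the geometric bound, whose
fixed point is `(v + σ1) h / (1 − γ)`.
-/

open Set

theorem norm_sub_le_mul_of_norm_deriv_le {E : Type*} [NormedAddCommGroup E] [NormedSpace ℝ E]
    {f : ℝ → E} {a b C : ℝ} (hf : Differentiable ℝ f) (hab : a ≤ b)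
    (hC : ∀ t ∈ Icc a b, ‖deriv f t‖ ≤ C) : ‖f b - f a‖ ≤ C * (b - a) :=
  norm_image_sub_le_of_norm_deriv_le_segment' (fun t _ => (hf t).hasDerivAt.hasDerivWithinAt)
    (fun t ht => hC t (Ico_subset_Icc_self ht)) b (right_mem_Icc.2 hab)

theorem norm_sample_succ_sub_le {E : Type*} [NormedAddCommGroup E] [NormedSpace ℝ E]
    {f : ℝ → E} {h C : ℝ} {k0 kb k : ℤ} (hh : 0 < h) (hf : Differentiable ℝ f)
    (hC : ∀ t ∈ Icc ((k0 : ℝ) * h) ((kb : ℝ) * h), ‖deriv f t‖ ≤ C) (hk0 : k0 ≤ k) (hkb : k < kb) :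
    ‖f ((k + 1 : ℤ) * h) - f (k * h)‖ ≤ C * h := by
  have hkb' : ((k + 1 : ℤ) : ℝ) ≤ kb := by exact_mod_cast hkb
  have hk0' : (k0 : ℝ) ≤ k := by exact_mod_cast hk0
  push_cast at hkb' ⊢
  calc ‖f ((k + 1) * h) - f (k * h)‖ ≤ C * ((k + 1) * h - k * h) :=
        norm_sub_le_mul_of_norm_deriv_le hf (by nlinarith) fun t ht =>
          hC t ⟨by nlinarith [ht.1], by nlinarith [ht.2]⟩
    _ = C * h := by ring

theorem norm_sub_le_add_add_of_chain {E : Type*} [SeminormedAddCommGroup E] {a b c d : E}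
    {α β δ : ℝ} (hab : ‖a - b‖ ≤ α) (hbc : ‖b - c‖ ≤ β) (hdc : ‖d - c‖ ≤ δ) :
    ‖a - d‖ ≤ α + δ + β := by
  have := norm_sub_le_norm_sub_add_norm_sub a b c
  have := norm_sub_le_norm_sub_add_norm_sub a c d
  rw [norm_sub_rev c d] at this
  linarith

section AffineRecursion

variable {e : ℤ → ℝ} {c γ : ℝ} {k0 kb : ℤ}

theorem le_of_affine_step_le (hγ0 : 0 ≤ γ) {r : ℝ} (hcr : c + γ * r ≤ r)
    (hstep : ∀ k, k0 ≤ k → k < kb → e k ≤ r → e (k + 1) ≤ c + γ * e k) (h0 : e k0 ≤ r) :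
    ∀ k, k0 ≤ k → k ≤ kb → e k ≤ r := by
  refine Int.leInduction (fun _ => h0) fun k hk ih hk1 => ?_
  have hek := ih (by omega)
  calc e (k + 1) ≤ c + γ * e k := hstep k hk (by omega) hek
    _ ≤ c + γ * r := by gcongr
    _ ≤ r := hcr

theorem le_div_one_sub_add_mul_pow_of_affine_step (hc : 0 ≤ c) (hγ0 : 0 ≤ γ) (hγ1 : γ < 1)
    (hstep : ∀ k, k0 ≤ k → k < kb → e (k + 1) ≤ c + γ * e k) :
    ∀ k, k0 ≤ k → k ≤ kb → e k ≤ c / (1 - γ) + e k0 * γ ^ (k - k0).toNat := by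
  have hfix : c + γ * (c / (1 - γ)) = c / (1 - γ) := by
    field_simp [(sub_pos.2 hγ1).ne']
    ring
  refine Int.leInduction (fun _ => ?_) (fun k hk ih hk1 => ?_)
  · simp only [sub_self, Int.toNat_zero, pow_zero, mul_one]
    linarith [div_nonneg hc (sub_pos.2 hγ1).le]
  · have hpow : (k + 1 - k0).toNat = (k - k0).toNat + 1 := by omega
    calc e (k + 1) ≤ c + γ * e k := hstep k hk (by omega)
      _ ≤ c + γ * (c / (1 - γ) + e k0 * γ ^ (k - k0).toNat) := by gcongr; exact ih (by omega)
      _ = c / (1 - γ) + e k0 * γ ^ (k + 1 - k0).toNat := by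
          rw [hpow, pow_succ]; linear_combination hfix

end AffineRecursion

theorem sharp_error_recursion_general
    {E : Type*} [NormedAddCommGroup E] [NormedSpace ℝ E]
    (h σ1 v r γ : ℝ) (hh : 0 < h) (hv : 0 ≤ v) (hr : 0 < r)
    (hγ0 : 0 ≤ γ) (hγ1 : γ < 1)
    (hγr : γ ≤ 1 - (v + σ1) * h / r)
    (k0 kb : ℤ) (hk : k0 < kb)
    (xs : ℝ → E) (hdiff : Differentiable ℝ xs)
    (hd : ∀ t ∈ Set.Icc ((k0 : ℝ) * h) ((kb : ℝ) * h), ‖deriv xs t‖ ≤ σ1)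
    (xhat xc : ℤ → E)
    (hacc : ∀ k : ℤ, k0 + 1 ≤ k → k ≤ kb → ‖xhat k - xc (k - 1)‖ ≤ v * h)
    (hcorr : ∀ k : ℤ, k0 ≤ k → k ≤ kb →
      ‖xhat k - xs ((k : ℝ) * h)‖ ≤ r →
      ‖xc k - xs ((k : ℝ) * h)‖ ≤ γ * ‖xhat k - xs ((k : ℝ) * h)‖)
    (hinit1 : ‖xhat k0 - xs ((k0 : ℝ) * h)‖ ≤ r) :
    (∀ k : ℤ, k0 + 1 ≤ k → k ≤ kb → ‖xhat k - xs ((k : ℝ) * h)‖ ≤ r) ∧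
    (∀ k : ℤ, k0 ≤ k → k ≤ kb →
      ‖xhat k - xs ((k : ℝ) * h)‖
        ≤ (v + σ1) * h / (1 - γ)
          + ‖xhat k0 - xs ((k0 : ℝ) * h)‖ * γ ^ (k - k0).toNat) := by
  have hσ1 : 0 ≤ σ1 := (norm_nonneg _).trans (hd _ (left_mem_Icc.2 (by gcongr)))
  have hstep : ∀ k : ℤ, k0 ≤ k → k < kb → ‖xhat k - xs (k * h)‖ ≤ r →
      ‖xhat (k + 1) - xs ((k + 1 : ℤ) * h)‖ ≤ (v + σ1) * h + γ * ‖xhat k - xs (k * h)‖ := by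
    intro k hk0 hkb her
    have hacc' : ‖xhat (k + 1) - xc k‖ ≤ v * h := by
      simpa using hacc (k + 1) (by omega) (by omega)
    have := norm_sub_le_add_add_of_chain hacc' (hcorr k hk0 hkb.le her)
      (norm_sample_succ_sub_le hh hdiff hd hk0 hkb)
    linarith
  have hstays : (v + σ1) * h + γ * r ≤ r := by
    have := mul_le_mul_of_nonneg_right hγr hr.le
    rw [sub_mul, div_mul_cancel₀ _ hr.ne'] at this
    linarith
  have hinv := le_of_affine_step_le hγ0 hstays hstep hinit1
  refine ⟨fun k hk1 hkb => hinv k (by omega) hkb, ?_⟩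
  exact le_div_one_sub_add_mul_pow_of_affine_step (by positivity) hγ0 hγ1
    fun k hk0 hkb => hstep k hk0 hkb (hinv k hk0 hkb.le)

/-- Error recursion lemma for the SHARP algorithm: under the acceptance
condition and a `γ`-contractive correction step, the prediction tracking error
`e_k = ‖x̂_k − x*(t_k)‖` stays within `r` and satisfies
`e_k ≤ (v+σ1)h/(1−γ) + e_{k0}·γ^{k−k0}`. -/
theorem sharp_error_recursion
    {E : Type*} [NormedAddCommGroup E] [NormedSpace ℝ E]
    (h σ1 v r γ : ℝ) (hh : 0 < h) (hv : 0 ≤ v) (hr : 0 < r)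
    (hγ0 : 0 ≤ γ) (hγ1 : γ < 1)
    (hγr : γ ≤ 1 - (v + σ1) * h / r) (hvr : (v + σ1) * h ≤ r)
    (k0 kb : ℤ) (hk : k0 < kb)
    (xs : ℝ → E) (hdiff : Differentiable ℝ xs)
    (hd : ∀ t ∈ Set.Icc ((k0 : ℝ) * h) ((kb : ℝ) * h), ‖deriv xs t‖ ≤ σ1)
    (xhat xc : ℤ → E)
    (hacc : ∀ k : ℤ, k0 + 1 ≤ k → k ≤ kb → ‖xhat k - xc (k - 1)‖ ≤ v * h)
    (hcorr : ∀ k : ℤ, k0 ≤ k → k ≤ kb →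
      ‖xhat k - xs ((k : ℝ) * h)‖ ≤ r →
      ‖xc k - xs ((k : ℝ) * h)‖ ≤ γ * ‖xhat k - xs ((k : ℝ) * h)‖)
    (hinit1 : ‖xhat k0 - xs ((k0 : ℝ) * h)‖ ≤ r)
    (hinit2 : ‖xc k0 - xs ((k0 : ℝ) * h)‖ ≤ r - (v + σ1) * h) :
    (∀ k : ℤ, k0 + 1 ≤ k → k ≤ kb → ‖xhat k - xs ((k : ℝ) * h)‖ ≤ r) ∧
    (∀ k : ℤ, k0 ≤ k → k ≤ kb →
      ‖xhat k - xs ((k : ℝ) * h)‖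
        ≤ (v + σ1) * h / (1 - γ)
          + ‖xhat k0 - xs ((k0 : ℝ) * h)‖ * γ ^ (k - k0).toNat) :=
  sharp_error_recursion_general h σ1 v r γ hh hv hr hγ0 hγ1 hγr k0 kb hk xs hdiff hd xhat xc hacc
    hcorr hinit1
end

section
/- In the setting of the previous error lemma — E a real normed vector space, h > 0, t_k = k·h, x* : ℝ → E differentiable with ‖(x*)'(t)‖ ≤ σ1 on [t_{k0}, t_{k̄}], v ≥ 0, r > 0, γ ∈ [0,1) with γ ≤ 1 − (v + σ1)h/r and (v+σ1)h ≤ r, sequences x̂_k, x_k satisfying the acceptance condition ‖x̂_k − x_{k−1}‖ ≤ vh for k0+1 ≤ k ≤ k̄, the correction contraction ‖x_k − x*(t_k)‖ ≤ γ‖x̂_k − x*(t_k)‖ whenever ‖x̂_k − x*(t_k)‖ ≤ r, and ‖x̂_{k0} − x*(t_{k0})‖ ≤ r, ‖x_{k0} − x*(t_{k0})‖ ≤ r − (v+σ1)h — assume additionally that p ≥ 2 and x* is p-times differentiable on [t_{k0}, t_{k̄}] with ‖(x*)^{(p)}(t)‖ ≤ σ_p there. Define the order-p prediction x̂_k^p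 := Σ_{i=1}^{p} (−1)^{i−1} binom(p,i) x_{k−i} and e_k := ‖x̂_k − x*(t_k)‖. Then for all k0 + p ≤ k ≤ k̄: ‖x̂_k^p − x_{k−1}‖ ≤ (2^p − 2)·γ·( (v + σ1)h/(1 − γ) + e_{k0}·γ^{k − k0 − p} ) + σ1·h + σ_p·h^p. In particular, if the right-hand side is at most v·h, the order-p prediction satisfies the acceptance condition ‖x̂_k^p − x_{k−1}‖ ≤ v·h. -/
/-!
The prediction is `x̂ᵖ_k = x_k - Δᵖ x_{k-p}` for every sequence `x` (backward Lagrange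
extrapolation is exact up to the `p`-th finite difference). Apply this to the tracking error
`x_j - x*(t_j)` and to the samples `x*(t_j)` separately. On the samples, `Δᵖ` is bounded by
`σ_p hᵖ` and one step by `σ₁ h` (iterated mean value theorem). On the errors, the coefficients of
`x̂ᵖ_k - x_{k-1}` have absolute values summing to `2ᵖ - 2`, and each corrected error is at most
`γ (S + γᴺ e_{k₀})` with `S = (v + σ₁) h / (1 - γ)`: the prediction errors obey
`e_{j+1} ≤ (1 - γ) S + γ e_j`, which keeps them below `r` so that the correction keeps
contracting.
-/

open Finset fwdDiff

theorem fwdDiff_iter_comp_addMonoidHom {M N G : Type*} [AddCommMonoid M] [AddCommMonoid N]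
    [AddCommGroup G] (φ : M →+ N) (a : M) (f : N → G) (n : ℕ) :
    (Δ_[a])^[n] (f ∘ φ) = (Δ_[φ a])^[n] f ∘ φ := by
  induction n with
  | zero => rfl
  | succ n ih =>
    ext m
    simp only [Function.iterate_succ_apply', ih, Function.comp_apply, fwdDiff, map_add]

section

variable {E : Type*} [AddCommGroup E] [Module ℝ E]

def lagrangeExtrapolation (p : ℕ) (y : ℤ → E) (k : ℤ) : E :=
  ∑ i ∈ Icc 1 p, ((-1 : ℝ) ^ (i - 1) * (p.choose i : ℝ)) • y (k - i)

theorem sum_range_alternating_choose_eq_fwdDiff_iter (p : ℕ) (y : ℤ → E) (k : ℤ) :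
    ∑ i ∈ range (p + 1), ((-1 : ℝ) ^ i * (p.choose i : ℝ)) • y (k - i)
      = (Δ_[1])^[p] y (k - p) := by
  rw [fwdDiff_iter_eq_sum_shift, ← sum_range_reflect]
  refine sum_congr rfl fun i hi => ?_
  have hip : i ≤ p := Nat.lt_succ_iff.mp (mem_range.mp hi)
  rw [Nat.add_sub_cancel, Nat.choose_symm hip, ← Int.cast_smul_eq_zsmul ℝ, Nat.cast_sub hip]
  congr 2
  · push_cast; ring
  · rw [nsmul_one]; ring

theorem lagrangeExtrapolation_eq_sub_fwdDiff_iter (p : ℕ) (y : ℤ → E) (k : ℤ) :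
    lagrangeExtrapolation p y k = y k - (Δ_[1])^[p] y (k - p) := by
  rw [← sum_range_alternating_choose_eq_fwdDiff_iter, sum_range_succ', lagrangeExtrapolation,
    ← Ico_add_one_right_eq_Icc, sum_Ico_eq_sum_range, Nat.add_sub_cancel]
  simp only [pow_zero, Nat.choose_zero_right, Nat.cast_zero, sub_zero, Nat.cast_one, one_mul,
    one_smul, sub_add_cancel_right, ← sum_neg_distrib, ← neg_smul, pow_succ, add_comm 1,
    Nat.add_sub_cancel, mul_neg_one, neg_mul, neg_neg]

theorem lagrangeExtrapolation_sub (p : ℕ) (y z : ℤ → E) (k : ℤ) :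
    lagrangeExtrapolation p (y - z) k =
      lagrangeExtrapolation p y k - lagrangeExtrapolation p z k := by
  simp only [lagrangeExtrapolation, Pi.sub_apply, smul_sub, sum_sub_distrib]

end

theorem sum_Icc_one_choose (p : ℕ) : ∑ i ∈ Icc 1 p, (p.choose i : ℝ) = 2 ^ p - 1 := by
  have := Nat.sum_range_choose p
  rw [range_eq_Ico, sum_eq_sum_Ico_succ_bot (Nat.succ_pos p), Nat.succ_eq_add_one,
    Ico_add_one_right_eq_Icc, zero_add, Nat.choose_zero_right] at this
  rw [eq_sub_iff_add_eq, add_comm]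
  exact_mod_cast this

theorem norm_lagrangeExtrapolation_sub_le {E : Type*} [SeminormedAddCommGroup E] [NormedSpace ℝ E]
    {p : ℕ} (hp : 1 ≤ p) {y : ℤ → E} {k : ℤ} {B : ℝ}
    (hB : ∀ i ∈ Icc 1 p, ‖y (k - i)‖ ≤ B) :
    ‖lagrangeExtrapolation p y k - y (k - 1)‖ ≤ (2 ^ p - 2) * B := by
  have h1 : 1 ∈ Icc 1 p := mem_Icc.2 ⟨le_rfl, hp⟩
  have hp' : (1 : ℝ) ≤ p := by exact_mod_cast hp
  have hsplit : lagrangeExtrapolation p y k - y (k - 1) = ((p : ℝ) - 1) • y (k - 1) +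
      ∑ i ∈ (Icc 1 p).erase 1, ((-1 : ℝ) ^ (i - 1) * (p.choose i : ℝ)) • y (k - i) := by
    rw [lagrangeExtrapolation, ← add_sum_erase _ _ h1]
    simp only [Nat.sub_self, pow_zero, Nat.choose_one_right, one_mul, Nat.cast_one, sub_smul,
      one_smul]
    abel
  have hchoose : ∑ i ∈ (Icc 1 p).erase 1, (p.choose i : ℝ) = 2 ^ p - 1 - p := by
    rw [← sum_Icc_one_choose, ← add_sum_erase _ _ h1, Nat.choose_one_right]
    ring
  rw [hsplit]
  calc _ ≤ ((p : ℝ) - 1) * ‖y (k - 1)‖ +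
        ∑ i ∈ (Icc 1 p).erase 1, (p.choose i : ℝ) * ‖y (k - i)‖ := by
        refine (norm_add_le _ _).trans (add_le_add ?_ (norm_sum_le_of_le _ fun i _ => ?_))
        · rw [norm_smul, Real.norm_of_nonneg (by linarith)]
        · simp [norm_smul]
    _ ≤ ((p : ℝ) - 1) * B + ∑ i ∈ (Icc 1 p).erase 1, (p.choose i : ℝ) * B := by
        gcongr with i hi
        · simpa using hB 1 h1
        · exact hB i (mem_of_mem_erase hi)
    _ = (2 ^ p - 2) * B := by rw [← sum_mul, hchoose]; ring

theorem norm_lagrangeExtrapolation_sub_le_of_tracking {E : Type*} [SeminormedAddCommGroup E]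
    [NormedSpace ℝ E] {p : ℕ} (hp : 1 ≤ p) {y g : ℤ → E} {k : ℤ} {B : ℝ}
    (hB : ∀ i ∈ Icc 1 p, ‖y (k - i) - g (k - i)‖ ≤ B) :
    ‖lagrangeExtrapolation p y k - y (k - 1)‖
      ≤ (2 ^ p - 2) * B + ‖g k - g (k - 1)‖ + ‖(Δ_[1])^[p] g (k - p)‖ := by
  have hsplit : lagrangeExtrapolation p y k - y (k - 1) =
      (lagrangeExtrapolation p (y - g) k - (y - g) (k - 1)) + (g k - g (k - 1))
        - (Δ_[1])^[p] g (k - p) := by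
    rw [lagrangeExtrapolation_sub, lagrangeExtrapolation_eq_sub_fwdDiff_iter p g, Pi.sub_apply]
    abel
  rw [hsplit]
  exact (norm_sub_le _ _).trans (add_le_add_left ((norm_add_le _ _).trans
    (add_le_add_left (norm_lagrangeExtrapolation_sub_le hp hB) _)) _)

section

variable {E : Type*} [NormedAddCommGroup E] [NormedSpace ℝ E]

theorem norm_fwdDiff_iter_le_of_hasDerivWithinAt {h : ℝ} (hh : 0 ≤ h) (n : ℕ) {a b M : ℝ}
    {d : ℕ → ℝ → E}
    (hd : ∀ i < n, ∀ t ∈ Set.Icc a b, HasDerivWithinAt (d i) (d (i + 1) t) (Set.Icc a b) t)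
    (hM : ∀ t ∈ Set.Icc a b, ‖d n t‖ ≤ M) {s : ℝ} (has : a ≤ s) (hsb : s + n * h ≤ b) :
    ‖(Δ_[h])^[n] (d 0) s‖ ≤ M * h ^ n := by
  induction n generalizing b M d with
  | zero => simpa using hM s ⟨has, by simpa using hsb⟩
  | succ n ih =>
    -- `(Δ_[h] (d i))ᵢ` is again a derivative chain, on `[a, b - h]`, and its `n`-th member is
    -- bounded by `M * h` by the mean value theorem.
    have hsub : Set.Icc a (b - h) ⊆ Set.Icc a b := Set.Icc_subset_Icc le_rfl (by linarith)
    have hshift : Set.MapsTo (· + h) (Set.Icc a (b - h)) (Set.Icc a b) :=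
      fun t ht => ⟨by linarith [ht.1], by linarith [ht.2]⟩
    have hd' : ∀ i < n, ∀ t ∈ Set.Icc a (b - h), HasDerivWithinAt (Δ_[h] (d i))
        (Δ_[h] (d (i + 1)) t) (Set.Icc a (b - h)) t := by
      intro i hi t ht
      have hcomp := (hd i (by omega) _ (hshift ht)).scomp t
        ((hasDerivWithinAt_id t _).add_const h) hshift
      rw [one_smul] at hcomp
      exact hcomp.sub ((hd i (by omega) t (hsub ht)).mono hsub)
    have hM' : ∀ t ∈ Set.Icc a (b - h), ‖Δ_[h] (d n) t‖ ≤ M * h := by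
      intro t ht
      have hmvt := (convex_Icc a b).norm_image_sub_le_of_norm_hasDerivWithin_le
        (fun x hx => hd n n.lt_succ_self x hx) hM (hsub ht) (hshift ht)
      rwa [add_sub_cancel_left, Real.norm_of_nonneg hh] at hmvt
    rw [Function.iterate_succ_apply, pow_succ', ← mul_assoc]
    exact ih hd' hM' (by push_cast at hsb; linarith)

theorem norm_fwdDiff_iter_sample_le {h : ℝ} (hh : 0 ≤ h) (n : ℕ) {a b M : ℝ}
    {d : ℕ → ℝ → E}
    (hd : ∀ i < n, ∀ t ∈ Set.Icc a b, HasDerivWithinAt (d i) (d (i + 1) t) (Set.Icc a b) t)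
    (hM : ∀ t ∈ Set.Icc a b, ‖d n t‖ ≤ M) {m : ℤ} (ham : a ≤ m * h) (hmb : (m + n) * h ≤ b) :
    ‖(Δ_[1])^[n] (fun j : ℤ => d 0 (j * h)) m‖ ≤ M * h ^ n := by
  have hgrid : (Δ_[1])^[n] (fun j : ℤ => d 0 (j * h)) m = (Δ_[h])^[n] (d 0) (m * h) := by
    simpa [Function.comp_def] using congr_fun
      (fwdDiff_iter_comp_addMonoidHom ((AddMonoidHom.mulRight h).comp (Int.castAddHom ℝ)) 1
        (d 0) n) m
  rw [hgrid]
  exact norm_fwdDiff_iter_le_of_hasDerivWithinAt hh n hd hM ham (by linarith)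

end

theorem le_of_guarded_affine_step {a : ℕ → ℝ} {N : ℕ} {γ S r : ℝ} (hγ0 : 0 ≤ γ) (hγ1 : γ ≤ 1)
    (hS : S ≤ r) (ha0 : a 0 ≤ r)
    (hstep : ∀ n < N, a n ≤ r → a (n + 1) ≤ (1 - γ) * S + γ * a n) :
    ∀ n ≤ N, a n ≤ (1 - γ ^ n) * S + γ ^ n * a 0 := by
  intro n hn
  induction n with
  | zero => simp
  | succ n ih =>
    have hbound := ih (by omega)
    have hpow0 : 0 ≤ γ ^ n := pow_nonneg hγ0 n
    have hpow1 : γ ^ n ≤ 1 := pow_le_one₀ hγ0 hγ1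
    have har : a n ≤ r := by nlinarith
    calc a (n + 1) ≤ (1 - γ) * S + γ * a n := hstep n (by omega) har
      _ ≤ (1 - γ) * S + γ * ((1 - γ ^ n) * S + γ ^ n * a 0) := by gcongr
      _ = (1 - γ ^ (n + 1)) * S + γ ^ (n + 1) * a 0 := by ring

section

variable {E : Type*} [SeminormedAddCommGroup E] {xhat xc g : ℤ → E} {k0 kb : ℤ} {γ S r : ℝ}

theorem sharp_prediction_error_le (hγ0 : 0 ≤ γ) (hγ1 : γ ≤ 1) (hS : S ≤ r)
    (hstep : ∀ j, k0 ≤ j → j < kb → ‖xhat (j + 1) - xc j‖ + ‖g (j + 1) - g j‖ ≤ (1 - γ) * S)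
    (hcorr : ∀ j, k0 ≤ j → j ≤ kb → ‖xhat j - g j‖ ≤ r → ‖xc j - g j‖ ≤ γ * ‖xhat j - g j‖)
    (hinit : ‖xhat k0 - g k0‖ ≤ r) {n : ℕ} (hn : k0 + n ≤ kb) :
    ‖xhat (k0 + n) - g (k0 + n)‖ ≤ (1 - γ ^ n) * S + γ ^ n * ‖xhat k0 - g k0‖ := by
  set a : ℕ → ℝ := fun m => ‖xhat (k0 + m) - g (k0 + m)‖
  have hstep' : ∀ m < (kb - k0).toNat, a m ≤ r → a (m + 1) ≤ (1 - γ) * S + γ * a m := by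
    intro m hm hmr
    simp only [a, Nat.cast_add, Nat.cast_one, ← add_assoc] at hmr ⊢
    have hj := hstep (k0 + m) (by omega) (by omega)
    have hc := hcorr (k0 + m) (by omega) (by omega) hmr
    have h1 := norm_sub_le_norm_sub_add_norm_sub (xhat (k0 + m + 1)) (g (k0 + m)) (g (k0 + m + 1))
    have h2 := norm_sub_le_norm_sub_add_norm_sub (xhat (k0 + m + 1)) (xc (k0 + m)) (g (k0 + m))
    rw [norm_sub_rev (g _)] at h1
    linarith
  simpa [a] using le_of_guarded_affine_step hγ0 hγ1 hS (by simpa [a] using hinit) hstep' n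
    (by omega)

theorem sharp_correction_error_le (hγ0 : 0 ≤ γ) (hγ1 : γ ≤ 1) (hS0 : 0 ≤ S) (hS : S ≤ r)
    (hstep : ∀ j, k0 ≤ j → j < kb → ‖xhat (j + 1) - xc j‖ + ‖g (j + 1) - g j‖ ≤ (1 - γ) * S)
    (hcorr : ∀ j, k0 ≤ j → j ≤ kb → ‖xhat j - g j‖ ≤ r → ‖xc j - g j‖ ≤ γ * ‖xhat j - g j‖)
    (hinit : ‖xhat k0 - g k0‖ ≤ r) {N : ℕ} {j : ℤ} (hNj : k0 + N ≤ j) (hjb : j ≤ kb) :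
    ‖xc j - g j‖ ≤ γ * (S + ‖xhat k0 - g k0‖ * γ ^ N) := by
  obtain ⟨n, rfl⟩ : ∃ n : ℕ, j = k0 + n := ⟨(j - k0).toNat, by omega⟩
  have hpred := sharp_prediction_error_le hγ0 hγ1 hS hstep hcorr hinit hjb
  have hpow0 : 0 ≤ γ ^ n := pow_nonneg hγ0 n
  have hpow1 : γ ^ n ≤ 1 := pow_le_one₀ hγ0 hγ1
  have hpowN : γ ^ n ≤ γ ^ N := pow_le_pow_of_le_one hγ0 hγ1 (by omega)
  have hE0 : 0 ≤ ‖xhat k0 - g k0‖ := norm_nonneg _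
  calc ‖xc (k0 + n) - g (k0 + n)‖ ≤ γ * ‖xhat (k0 + n) - g (k0 + n)‖ :=
        hcorr _ (by omega) hjb (by nlinarith)
    _ ≤ γ * (S + ‖xhat k0 - g k0‖ * γ ^ N) := by gcongr; nlinarith

end

theorem sharp_acceptance_of_higher_order_prediction_general
    {E : Type*} [NormedAddCommGroup E] [NormedSpace ℝ E]
    (h σ1 σp v r γ : ℝ) (hh : 0 < h) (hv : 0 ≤ v) (hr : 0 < r)
    (hγ0 : 0 ≤ γ) (hγ1 : γ < 1)
    (hγr : γ ≤ 1 - (v + σ1) * h / r)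
    (p : ℕ) (hp : 2 ≤ p)
    (k0 kb : ℤ)
    (xs : ℝ → E) (d : ℕ → ℝ → E) (hd0 : d 0 = xs)
    (hderiv : ∀ i < p, ∀ t ∈ Set.Icc ((k0 : ℝ) * h) ((kb : ℝ) * h),
      HasDerivWithinAt (d i) (d (i + 1) t) (Set.Icc ((k0 : ℝ) * h) ((kb : ℝ) * h)) t)
    (hσ1 : ∀ t ∈ Set.Icc ((k0 : ℝ) * h) ((kb : ℝ) * h), ‖d 1 t‖ ≤ σ1)
    (hσp : ∀ t ∈ Set.Icc ((k0 : ℝ) * h) ((kb : ℝ) * h), ‖d p t‖ ≤ σp)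
    (xhat xc : ℤ → E)
    (hacc : ∀ k : ℤ, k0 + 1 ≤ k → k ≤ kb → ‖xhat k - xc (k - 1)‖ ≤ v * h)
    (hcorr : ∀ k : ℤ, k0 ≤ k → k ≤ kb →
      ‖xhat k - xs ((k : ℝ) * h)‖ ≤ r →
      ‖xc k - xs ((k : ℝ) * h)‖ ≤ γ * ‖xhat k - xs ((k : ℝ) * h)‖)
    (hinit1 : ‖xhat k0 - xs ((k0 : ℝ) * h)‖ ≤ r)
    (k : ℤ) (hk1 : k0 + p ≤ k) (hk2 : k ≤ kb) :
    ‖(∑ i ∈ Finset.Icc 1 p,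
        ((-1 : ℝ) ^ (i - 1) * (p.choose i : ℝ)) • xc (k - i)) - xc (k - 1)‖
      ≤ (2 ^ p - 2) * γ *
          ((v + σ1) * h / (1 - γ)
            + ‖xhat k0 - xs ((k0 : ℝ) * h)‖ * γ ^ (k - k0 - p).toNat)
        + σ1 * h + σp * h ^ p ∧
    ((2 ^ p - 2) * γ *
          ((v + σ1) * h / (1 - γ)
            + ‖xhat k0 - xs ((k0 : ℝ) * h)‖ * γ ^ (k - k0 - p).toNat)
        + σ1 * h + σp * h ^ p ≤ v * h →
      ‖(∑ i ∈ Finset.Icc 1 p,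
          ((-1 : ℝ) ^ (i - 1) * (p.choose i : ℝ)) • xc (k - i)) - xc (k - 1)‖
        ≤ v * h) := by
  subst hd0
  set g : ℤ → E := fun j => d 0 (j * h)
  set S := (v + σ1) * h / (1 - γ)
  have hγ1' : 0 < 1 - γ := by linarith
  have hgrid : ∀ {i j : ℤ}, i ≤ j → (i : ℝ) * h ≤ j * h := fun hij => by gcongr
  have hσ1_nonneg : 0 ≤ σ1 := (norm_nonneg _).trans (hσ1 _ ⟨le_rfl, hgrid (by omega)⟩)
  have hS0 : 0 ≤ S := by positivity
  have hSr : S ≤ r := (div_le_iff₀ hγ1').2 ((div_le_iff₀' hr).1 (by linarith))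
  have hdrift : ∀ j, k0 ≤ j → j < kb → ‖g (j + 1) - g j‖ ≤ σ1 * h := fun j hj hjb => by
    have hj1 : j + 1 ≤ kb := by omega
    simpa [g, fwdDiff] using norm_fwdDiff_iter_sample_le hh.le 1
      (fun i hi => hderiv i (by omega)) hσ1 (hgrid hj) (by exact_mod_cast hgrid hj1)
  have hstep : ∀ j, k0 ≤ j → j < kb →
      ‖xhat (j + 1) - xc j‖ + ‖g (j + 1) - g j‖ ≤ (1 - γ) * S := fun j hj hjb => by
    have hacc_j := hacc (j + 1) (by omega) (by omega)
    rw [add_sub_cancel_right] at hacc_j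
    linarith [hdrift j hj hjb, mul_div_cancel₀ ((v + σ1) * h) hγ1'.ne']
  have herr : ∀ i ∈ Finset.Icc 1 p, ‖xc (k - i) - g (k - i)‖
      ≤ γ * (S + ‖xhat k0 - g k0‖ * γ ^ (k - k0 - p).toNat) := fun i hi => by
    have := Finset.mem_Icc.1 hi
    exact sharp_correction_error_le hγ0 hγ1.le hS0 hSr hstep hcorr hinit1 (by omega) (by omega)
  have hdiff : ‖(Δ_[1])^[p] g (k - p)‖ ≤ σp * h ^ p :=
    norm_fwdDiff_iter_sample_le hh.le p hderiv hσp (by exact_mod_cast hgrid (by omega))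
      (by simpa using hgrid hk2)
  have hlast : ‖g k - g (k - 1)‖ ≤ σ1 * h := by simpa using hdrift (k - 1) (by omega) (by omega)
  have hbound : ‖lagrangeExtrapolation p xc k - xc (k - 1)‖ ≤ (2 ^ p - 2) * γ *
      (S + ‖xhat k0 - g k0‖ * γ ^ (k - k0 - p).toNat) + σ1 * h + σp * h ^ p := by
    have := norm_lagrangeExtrapolation_sub_le_of_tracking (by omega) herr
    rw [mul_assoc]
    linarith
  exact ⟨hbound, hbound.trans⟩

/-- Bound on the step size of the order-`p` Lagrange-extrapolation prediction
of the SHARP algorithm; in particular, when the bound is at most `v·h`, the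
order-`p` prediction satisfies the acceptance condition. -/
theorem sharp_acceptance_of_higher_order_prediction
    {E : Type*} [NormedAddCommGroup E] [NormedSpace ℝ E]
    (h σ1 σp v r γ : ℝ) (hh : 0 < h) (hv : 0 ≤ v) (hr : 0 < r)
    (hγ0 : 0 ≤ γ) (hγ1 : γ < 1)
    (hγr : γ ≤ 1 - (v + σ1) * h / r) (hvr : (v + σ1) * h ≤ r)
    (p : ℕ) (hp : 2 ≤ p)
    (k0 kb : ℤ) (hk : k0 < kb)
    (xs : ℝ → E) (d : ℕ → ℝ → E) (hd0 : d 0 = xs)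
    (hderiv : ∀ i < p, ∀ t ∈ Set.Icc ((k0 : ℝ) * h) ((kb : ℝ) * h),
      HasDerivWithinAt (d i) (d (i + 1) t) (Set.Icc ((k0 : ℝ) * h) ((kb : ℝ) * h)) t)
    (hσ1 : ∀ t ∈ Set.Icc ((k0 : ℝ) * h) ((kb : ℝ) * h), ‖d 1 t‖ ≤ σ1)
    (hσp : ∀ t ∈ Set.Icc ((k0 : ℝ) * h) ((kb : ℝ) * h), ‖d p t‖ ≤ σp)
    (xhat xc : ℤ → E)
    (hacc : ∀ k : ℤ, k0 + 1 ≤ k → k ≤ kb → ‖xhat k - xc (k - 1)‖ ≤ v * h)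
    (hcorr : ∀ k : ℤ, k0 ≤ k → k ≤ kb →
      ‖xhat k - xs ((k : ℝ) * h)‖ ≤ r →
      ‖xc k - xs ((k : ℝ) * h)‖ ≤ γ * ‖xhat k - xs ((k : ℝ) * h)‖)
    (hinit1 : ‖xhat k0 - xs ((k0 : ℝ) * h)‖ ≤ r)
    (hinit2 : ‖xc k0 - xs ((k0 : ℝ) * h)‖ ≤ r - (v + σ1) * h)
    (k : ℤ) (hk1 : k0 + p ≤ k) (hk2 : k ≤ kb) :
    ‖(∑ i ∈ Finset.Icc 1 p,
        ((-1 : ℝ) ^ (i - 1) * (p.choose i : ℝ)) • xc (k - i)) - xc (k - 1)‖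
      ≤ (2 ^ p - 2) * γ *
          ((v + σ1) * h / (1 - γ)
            + ‖xhat k0 - xs ((k0 : ℝ) * h)‖ * γ ^ (k - k0 - p).toNat)
        + σ1 * h + σp * h ^ p ∧
    ((2 ^ p - 2) * γ *
          ((v + σ1) * h / (1 - γ)
            + ‖xhat k0 - xs ((k0 : ℝ) * h)‖ * γ ^ (k - k0 - p).toNat)
        + σ1 * h + σp * h ^ p ≤ v * h →
      ‖(∑ i ∈ Finset.Icc 1 p,
          ((-1 : ℝ) ^ (i - 1) * (p.choose i : ℝ)) • xc (k - i)) - xc (k - 1)‖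
        ≤ v * h) :=
  sharp_acceptance_of_higher_order_prediction_general h σ1 σp v r γ hh hv hr hγ0 hγ1 hγr p hp k0 kb
    xs d hd0 hderiv hσ1 hσp xhat xc hacc hcorr hinit1 k hk1 hk2
end

section
/- Let P ≥ 1 be an integer, 0 < γ < 1/(2^P − 1), b ≥ 0, and let k1 ≥ 0 be an integer. Let (e_k)_{k ≥ k1} be a sequence of nonnegative reals satisfying e_k ≤ γ·Σ_{i=1}^{P} binom(P,i)·e_{k−i} + b for all k ≥ k1 + P. Then there exists a constant M ≥ 0 such that for all k ≥ k1: e_k ≤ b/(1 − (2^P − 1)γ) + M·( (1 + γ^{−1})^{1/P} − 1 )^{−k}. -/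
/-!
With `A = b / (1 - (2^P - 1)γ)` the fixed point of `x ↦ γ(2^P - 1)x + b` and
`r = ((1 + γ⁻¹)^{1/P} - 1)⁻¹`, which satisfies `γ((r + 1)^P - r^P) = r^P`, every sequence
`A + M r^k` solves the recursion with equality. The recursion has nonnegative weights, so it is
monotone, and strong induction keeps `e` below such a solution once `M` is large enough for `e`
to lie below it on the first `P` terms.
-/

open Finset

theorem sum_Icc_choose_mul_pow {R : Type*} [CommRing R] (P : ℕ) (x : R) :
    ∑ i ∈ Icc 1 P, (P.choose i : R) * x ^ (P - i) = (x + 1) ^ P - x ^ P := by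
  have h := add_pow (1 : R) x P
  rw [range_eq_Ico, sum_eq_sum_Ico_succ_bot P.succ_pos, zero_add, Nat.succ_eq_add_one,
    Ico_add_one_right_eq_Icc] at h
  simp only [one_pow, one_mul, Nat.sub_zero, Nat.choose_zero_right, Nat.cast_one, mul_one] at h
  rw [add_comm x 1, h]
  simp only [mul_comm, add_sub_cancel_left]

theorem sum_Icc_choose_mul_pow_of_le {R : Type*} [CommRing R] {P k : ℕ} (hk : P ≤ k) (x : R) :
    ∑ i ∈ Icc 1 P, (P.choose i : R) * x ^ (k - i) = x ^ (k - P) * ((x + 1) ^ P - x ^ P) := by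
  rw [← sum_Icc_choose_mul_pow, mul_sum]
  refine sum_congr rfl fun i hi => ?_
  rw [mul_left_comm, ← pow_add]
  congr 2
  have := (mem_Icc.mp hi).2
  omega

theorem le_of_le_weighted_sum_of_weighted_sum_le {w e f : ℕ → ℝ} {P k₀ : ℕ} {b : ℝ}
    (hw : ∀ i ∈ Icc 1 P, 0 ≤ w i)
    (he : ∀ k, k₀ + P ≤ k → e k ≤ ∑ i ∈ Icc 1 P, w i * e (k - i) + b)
    (hf : ∀ k, k₀ + P ≤ k → ∑ i ∈ Icc 1 P, w i * f (k - i) + b ≤ f k)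
    (hinit : ∀ k, k₀ ≤ k → k < k₀ + P → e k ≤ f k) :
    ∀ k, k₀ ≤ k → e k ≤ f k := by
  intro k
  induction k using Nat.strong_induction_on with
  | _ k ih =>
    intro hk
    by_cases hkP : k < k₀ + P
    · exact hinit k hk hkP
    have hsum : ∑ i ∈ Icc 1 P, w i * e (k - i) ≤ ∑ i ∈ Icc 1 P, w i * f (k - i) := by
      refine sum_le_sum fun i hi => mul_le_mul_of_nonneg_left ?_ (hw i hi)
      have := mem_Icc.mp hi
      exact ih (k - i) (by omega) (by omega)
    linarith [he k (by omega), hf k (by omega)]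

theorem sum_Icc_choose_mul_const_add_pow {R : Type*} [CommRing R] {γ r A b : R} (M : R)
    {P k : ℕ} (hk : P ≤ k) (hroot : γ * ((r + 1) ^ P - r ^ P) = r ^ P)
    (hA : (2 ^ P - 1) * γ * A + b = A) :
    ∑ i ∈ Icc 1 P, γ * P.choose i * (A + M * r ^ (k - i)) + b = A + M * r ^ k := by
  have hone := sum_Icc_choose_mul_pow_of_le hk (1 : R)
  have hgeom := sum_Icc_choose_mul_pow_of_le hk r
  simp only [one_pow, mul_one, one_mul, one_add_one_eq_two] at hone
  have hsplit : ∑ i ∈ Icc 1 P, γ * P.choose i * (A + M * r ^ (k - i))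
      = γ * A * ∑ i ∈ Icc 1 P, (P.choose i : R)
        + γ * M * ∑ i ∈ Icc 1 P, (P.choose i : R) * r ^ (k - i) := by
    rw [mul_sum, mul_sum, ← sum_add_distrib]
    exact sum_congr rfl fun i _ => by ring
  have hpow : r ^ (k - P) * r ^ P = r ^ k := by rw [← pow_add, Nat.sub_add_cancel hk]
  rw [hsplit, hone, hgeom]
  linear_combination M * r ^ (k - P) * hroot + hA + M * hpow

noncomputable def binomRoot (x : ℝ) (P : ℕ) : ℝ := (x ^ ((1 : ℝ) / P) - 1)⁻¹

theorem binomRoot_pos {x : ℝ} (hx : 1 < x) {P : ℕ} (hP : P ≠ 0) : 0 < binomRoot x P :=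
  inv_pos.mpr (sub_pos.mpr (Real.one_lt_rpow hx (by positivity)))

theorem binomRoot_add_one_pow {x : ℝ} (hx : 1 < x) {P : ℕ} (hP : P ≠ 0) :
    (binomRoot x P + 1) ^ P = x * binomRoot x P ^ P := by
  have hs : (x ^ ((1 : ℝ) / P)) ^ P = x := by
    rw [one_div, Real.rpow_inv_natCast_pow (by linarith) hP]
  have hs1 : x ^ ((1 : ℝ) / P) - 1 ≠ 0 :=
    (sub_pos.mpr (Real.one_lt_rpow hx (by positivity))).ne'
  have hr : binomRoot x P + 1 = x ^ ((1 : ℝ) / P) * binomRoot x P := by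
    unfold binomRoot
    field_simp
    ring
  rw [hr, mul_pow, hs]

theorem mul_binomRoot_one_add_inv {γ : ℝ} (hγ : 0 < γ) {P : ℕ} (hP : P ≠ 0) :
    γ * ((binomRoot (1 + γ⁻¹) P + 1) ^ P - binomRoot (1 + γ⁻¹) P ^ P)
      = binomRoot (1 + γ⁻¹) P ^ P := by
  rw [binomRoot_add_one_pow (lt_add_of_pos_right 1 (inv_pos.mpr hγ)) hP, ← sub_one_mul,
    add_sub_cancel_left, ← mul_assoc, mul_inv_cancel₀ hγ.ne', one_mul]

theorem le_add_sum_abs_sub_mul_inv_pow_mul_pow {e : ℕ → ℝ} {s : Finset ℕ} {k : ℕ} (hk : k ∈ s)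
    (A : ℝ) {r : ℝ} (hr : 0 < r) :
    e k ≤ A + (∑ j ∈ s, |e j - A| * r⁻¹ ^ j) * r ^ k := by
  have hle := single_le_sum (f := fun j => |e j - A| * r⁻¹ ^ j) (fun j _ => by positivity) hk
  have hcancel : |e k - A| * r⁻¹ ^ k * r ^ k = |e k - A| := by
    rw [mul_assoc, ← mul_pow, inv_mul_cancel₀ hr.ne', one_pow, mul_one]
  have := mul_le_mul_of_nonneg_right hle (pow_nonneg hr.le k)
  linarith [le_abs_self (e k - A)]

theorem sharp_recursion_solution_general
    (P : ℕ) (hP : 1 ≤ P) (γ b : ℝ) (hγ0 : 0 < γ)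
    (hγ1 : γ < 1 / (2 ^ P - 1))
    (k1 : ℕ) (e : ℕ → ℝ)
    (hrec : ∀ k, k1 + P ≤ k →
      e k ≤ γ * ∑ i ∈ Finset.Icc 1 P, (P.choose i : ℝ) * e (k - i) + b) :
    ∃ M : ℝ, 0 ≤ M ∧ ∀ k, k1 ≤ k →
      e k ≤ b / (1 - (2 ^ P - 1) * γ)
        + M * (((1 + γ⁻¹) ^ ((1 : ℝ) / P) - 1)⁻¹) ^ k := by
  have hP0 : P ≠ 0 := by omega
  have hden : 0 < 1 - (2 ^ P - 1) * γ := by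
    have : (1 : ℝ) < 2 ^ P := one_lt_pow₀ one_lt_two hP0
    rw [lt_div_iff₀ (by linarith)] at hγ1
    linarith
  have hA : (2 ^ P - 1) * γ * (b / (1 - (2 ^ P - 1) * γ)) + b = b / (1 - (2 ^ P - 1) * γ) := by
    linear_combination -div_mul_cancel₀ b hden.ne'
  have hroot := mul_binomRoot_one_add_inv hγ0 hP0
  have hr := binomRoot_pos (lt_add_of_pos_right 1 (inv_pos.mpr hγ0)) hP0
  rw [← binomRoot.eq_1]
  generalize binomRoot (1 + γ⁻¹) P = r at hroot hr ⊢
  generalize b / (1 - (2 ^ P - 1) * γ) = A at hA ⊢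
  refine ⟨∑ j ∈ Ico k1 (k1 + P), |e j - A| * r⁻¹ ^ j, by positivity, ?_⟩
  refine le_of_le_weighted_sum_of_weighted_sum_le (w := fun i => γ * P.choose i) (P := P) (b := b)
    (fun i _ => by positivity) (fun k hk => ?_) (fun k hk => ?_) (fun k hk hkP => ?_)
  · simpa only [mul_sum, mul_assoc] using hrec k hk
  · exact (sum_Icc_choose_mul_const_add_pow _ (by omega) hroot hA).le
  · exact le_add_sum_abs_sub_mul_inv_pow_mul_pow (mem_Ico.mpr ⟨hk, hkP⟩) A hr

/-- Solution of the SHARP tracking-error recursion: if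
`e_k ≤ γ·Σ_{i=1}^P binom(P,i)·e_{k−i} + b` for `k ≥ k1 + P` with
`γ < 1/(2^P − 1)`, then `e_k ≤ b/(1 − (2^P − 1)γ) + M·((1+γ⁻¹)^{1/P} − 1)^{−k}`
for some constant `M ≥ 0`. -/
theorem sharp_recursion_solution
    (P : ℕ) (hP : 1 ≤ P) (γ b : ℝ) (hγ0 : 0 < γ)
    (hγ1 : γ < 1 / (2 ^ P - 1)) (hb : 0 ≤ b)
    (k1 : ℕ) (e : ℕ → ℝ) (he0 : ∀ k, k1 ≤ k → 0 ≤ e k)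
    (hrec : ∀ k, k1 + P ≤ k →
      e k ≤ γ * ∑ i ∈ Finset.Icc 1 P, (P.choose i : ℝ) * e (k - i) + b) :
    ∃ M : ℝ, 0 ≤ M ∧ ∀ k, k1 ≤ k →
      e k ≤ b / (1 - (2 ^ P - 1) * γ)
        + M * (((1 + γ⁻¹) ^ ((1 : ℝ) / P) - 1)⁻¹) ^ k :=
  sharp_recursion_solution_general P hP γ b hγ0 hγ1 k1 e hrec
end

section
/- Let P ≥ 1 be an integer and γ > 0 a real number. Consider the complex polynomial q(z) = (1 + γ)·z^P − γ·(z + 1)^P, which equals z^P − γ·Σ_{i=1}^{P} binom(P,i)·z^{P−i}. Then the roots of q in ℂ are exactly the P numbers z_j = ( (1 + γ^{−1})^{1/P}·exp(2πi·j/P) − 1 )^{−1} for j = 0, 1, …, P−1 (where (1+γ^{−1})^{1/P} denotes the positive real P-th root), these P roots are pairwise distinct, and every root z of q satisfies |z| ≤ ( (1 + γ^{−1})^{1/P} − 1 )^{−1}, with equality attained at j = 0. Moreover ((1 + γ^{−1})^{1/P} − 1)^{−1} < 1 if and only if γ < 1/(2^P − 1). -/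
/-!
Substituting `w = 1 + z⁻¹` turns `(1 + γ) z^P = γ (z + 1)^P` into `w^P = 1 + γ⁻¹`, whose solutions
are `w = r ζ^j` with `r = (1 + γ⁻¹)^{1/P} > 1` and `ζ = exp (2πi/P)`; hence the roots are
`(r ζ^j - 1)⁻¹`, distinct because the `ζ^j` are. Since `‖r ζ^j - 1‖ ≥ r - 1` with equality at
`j = 0`, the largest modulus is `(r - 1)⁻¹`, and `(r - 1)⁻¹ < 1 ↔ 2 < r ↔ 2^P < 1 + γ⁻¹`.
-/

/-- The `j`-th root `((1+γ⁻¹)^{1/P}·exp(2πij/P) − 1)⁻¹` of the characteristic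
polynomial `(1+γ)z^P − γ(z+1)^P` of the SHARP error recursion. -/
noncomputable def sharpCharRoot (P : ℕ) (γ : ℝ) (j : ℕ) : ℂ :=
  ((((1 + γ⁻¹) ^ ((1 : ℝ) / P) : ℝ) : ℂ)
      * Complex.exp (2 * Real.pi * Complex.I * j / P) - 1)⁻¹

open Complex

theorem add_one_pow_eq_pow_add_sum_Icc {R : Type*} [CommSemiring R] (z : R) (n : ℕ) :
    (z + 1) ^ n = z ^ n + ∑ i ∈ Finset.Icc 1 n, (n.choose i : R) * z ^ (n - i) := by
  rw [add_comm, add_pow, Finset.range_eq_Ico, Finset.sum_eq_sum_Ico_succ_bot (by omega), zero_add,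
    Finset.Ico_add_one_right_eq_Icc]
  simp only [one_pow, Nat.choose_zero_right, Nat.cast_one, mul_one, Nat.sub_zero, mul_comm]

theorem mul_pow_sub_mul_add_one_pow_eq_zero_iff {K : Type*} [Field K] {c : K} (hc : c ≠ 0)
    (n : ℕ) (z : K) :
    (1 + c) * z ^ n - c * (z + 1) ^ n = 0 ↔ ∃ w, w ^ n = 1 + c⁻¹ ∧ z = (w - 1)⁻¹ := by
  constructor
  · intro hz
    have hz0 : z ≠ 0 := by
      rintro rfl
      cases n <;> simp_all
    refine ⟨1 + z⁻¹, ?_, by simp⟩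
    have hw : (1 + z⁻¹) ^ n = (z + 1) ^ n / z ^ n := by
      rw [← div_pow]; field_simp
    rw [hw, div_eq_iff (pow_ne_zero n hz0)]
    field_simp
    linear_combination -hz
  · rintro ⟨w, hw, rfl⟩
    have hw1 : w - 1 ≠ 0 := by
      intro h
      rw [sub_eq_zero.mp h, one_pow, left_eq_add] at hw
      exact inv_ne_zero hc hw
    have hz1 : (w - 1)⁻¹ + 1 = w * (w - 1)⁻¹ := by field_simp; ring
    rw [hz1, mul_pow, hw]
    field_simp
    ring

theorem IsPrimitiveRoot.pow_eq_pow_iff {K : Type*} [Field K] {ζ : K} {n : ℕ} [NeZero n]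
    (hζ : IsPrimitiveRoot ζ n) {r : K} (hr : r ≠ 0) (w : K) :
    w ^ n = r ^ n ↔ ∃ j < n, w = r * ζ ^ j := by
  constructor
  · intro hw
    obtain ⟨j, hj, hζj⟩ := hζ.eq_pow_of_pow_eq_one (ξ := w / r) (by
      rw [div_pow, hw, div_self (pow_ne_zero n hr)])
    exact ⟨j, hj, by rw [hζj, mul_div_cancel₀ w hr]⟩
  · rintro ⟨j, -, rfl⟩
    rw [mul_pow, ← pow_mul, mul_comm j, pow_mul, hζ.pow_eq_one, one_pow, mul_one]

theorem norm_inv_sub_one_le {𝕜 : Type*} [NormedDivisionRing 𝕜] {u : 𝕜} (hu : 1 < ‖u‖) :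
    ‖(u - 1)⁻¹‖ ≤ (‖u‖ - 1)⁻¹ := by
  rw [norm_inv]
  refine inv_anti₀ (by linarith) ?_
  simpa using norm_sub_norm_le u 1

theorem inv_sub_one_lt_one_iff {r : ℝ} (hr : 1 < r) : (r - 1)⁻¹ < 1 ↔ 2 < r := by
  rw [inv_lt_one_iff₀]
  constructor
  · rintro (h | h) <;> linarith
  · intro h; right; linarith

theorem sharpCharRoot_eq (P : ℕ) (γ : ℝ) (j : ℕ) :
    sharpCharRoot P γ j =
      (((1 + γ⁻¹) ^ ((1 : ℝ) / P) : ℝ) * exp (2 * Real.pi * I / P) ^ j - 1)⁻¹ := by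
  rw [sharpCharRoot, ← exp_nat_mul]
  ring_nf

theorem norm_ofReal_mul_exp_two_pi_I_div_pow {r : ℝ} (hr : 0 ≤ r) (n j : ℕ) :
    ‖(r : ℂ) * exp (2 * Real.pi * I / n) ^ j‖ = r := by
  simp [norm_exp, hr]

theorem sharp_char_eq_zero_iff {P : ℕ} (hP : P ≠ 0) {γ : ℝ} (hγ : 0 < γ) (z : ℂ) :
    (1 + (γ : ℂ)) * z ^ P - (γ : ℂ) * (z + 1) ^ P = 0 ↔ ∃ j < P, z = sharpCharRoot P γ j := by
  have : NeZero P := ⟨hP⟩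
  have hrP : (((1 + γ⁻¹) ^ ((1 : ℝ) / P) : ℝ) : ℂ) ^ P = 1 + (γ : ℂ)⁻¹ := by
    rw [← ofReal_pow, one_div, Real.rpow_inv_natCast_pow (by positivity) hP]
    push_cast; rfl
  rw [mul_pow_sub_mul_add_one_pow_eq_zero_iff (ofReal_ne_zero.2 hγ.ne')]
  have hr : (((1 + γ⁻¹) ^ ((1 : ℝ) / P) : ℝ) : ℂ) ≠ 0 := ofReal_ne_zero.2 (by positivity)
  simp_rw [← hrP, (isPrimitiveRoot_exp P hP).pow_eq_pow_iff hr, sharpCharRoot_eq]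
  constructor
  · rintro ⟨w, ⟨j, hj, rfl⟩, rfl⟩
    exact ⟨j, hj, rfl⟩
  · rintro ⟨j, hj, rfl⟩
    exact ⟨_, ⟨j, hj, rfl⟩, rfl⟩

theorem sharpCharRoot_injOn {P : ℕ} (hP : P ≠ 0) {γ : ℝ} (hγ : 0 < γ) :
    Set.InjOn (sharpCharRoot P γ) (Set.Iio P) := by
  intro j1 hj1 j2 hj2 h
  simp only [sharpCharRoot_eq, inv_inj, sub_left_inj] at h
  exact (isPrimitiveRoot_exp P hP).pow_inj hj1 hj2
    (mul_left_cancel₀ (ofReal_ne_zero.2 (by positivity)) h)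

theorem one_lt_rpow_one_div {P : ℕ} (hP : P ≠ 0) {γ : ℝ} (hγ : 0 < γ) :
    1 < (1 + γ⁻¹) ^ ((1 : ℝ) / P) :=
  Real.one_lt_rpow (by simp [hγ]) (by positivity)

theorem norm_sharpCharRoot_le {P : ℕ} (hP : P ≠ 0) {γ : ℝ} (hγ : 0 < γ) (j : ℕ) :
    ‖sharpCharRoot P γ j‖ ≤ ((1 + γ⁻¹) ^ ((1 : ℝ) / P) - 1)⁻¹ := by
  have hr := one_lt_rpow_one_div hP hγ
  have hnorm := norm_ofReal_mul_exp_two_pi_I_div_pow (zero_lt_one.trans hr).le P j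
  rw [sharpCharRoot_eq]
  exact (norm_inv_sub_one_le (by rwa [hnorm])).trans_eq (by rw [hnorm])

theorem norm_sharpCharRoot_zero {P : ℕ} (hP : P ≠ 0) {γ : ℝ} (hγ : 0 < γ) :
    ‖sharpCharRoot P γ 0‖ = ((1 + γ⁻¹) ^ ((1 : ℝ) / P) - 1)⁻¹ := by
  rw [sharpCharRoot_eq, pow_zero, mul_one, norm_inv, ← ofReal_one, ← ofReal_sub, norm_real,
    Real.norm_of_nonneg (sub_nonneg.2 (one_lt_rpow_one_div hP hγ).le)]

theorem two_lt_rpow_one_div_iff {n : ℕ} (hn : n ≠ 0) {γ : ℝ} (hγ : 0 < γ) :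
    2 < (1 + γ⁻¹) ^ ((1 : ℝ) / n) ↔ γ < 1 / (2 ^ n - 1) := by
  have h2n : (0 : ℝ) < 2 ^ n - 1 := by
    have : (2 : ℝ) ^ 1 ≤ 2 ^ n := pow_le_pow_right₀ (by norm_num) (by omega)
    linarith
  rw [one_div, Real.lt_rpow_inv_iff_of_pos (by norm_num) (by positivity) (by positivity),
    Real.rpow_natCast, lt_one_div hγ h2n, one_div]
  constructor <;> intro h <;> linarith

/-- Characterization of the roots of the characteristic polynomial
`q(z) = (1+γ)z^P − γ(z+1)^P = z^P − γΣ_{i=1}^P binom(P,i)z^{P−i}`: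
they are exactly `sharpCharRoot P γ j` for `j = 0,…,P−1`, pairwise distinct,
with maximal modulus `((1+γ⁻¹)^{1/P} − 1)⁻¹` attained at `j = 0`, and this
modulus is `< 1` iff `γ < 1/(2^P − 1)`. -/
theorem sharp_characteristic_polynomial_roots
    (P : ℕ) (hP : 1 ≤ P) (γ : ℝ) (hγ : 0 < γ) :
    (∀ z : ℂ, (1 + (γ : ℂ)) * z ^ P - (γ : ℂ) * (z + 1) ^ P
        = z ^ P - (γ : ℂ) * ∑ i ∈ Finset.Icc 1 P, (P.choose i : ℂ) * z ^ (P - i)) ∧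
    (∀ z : ℂ, (1 + (γ : ℂ)) * z ^ P - (γ : ℂ) * (z + 1) ^ P = 0 ↔
        ∃ j < P, z = sharpCharRoot P γ j) ∧
    (∀ j1 < P, ∀ j2 < P, sharpCharRoot P γ j1 = sharpCharRoot P γ j2 → j1 = j2) ∧
    (∀ z : ℂ, (1 + (γ : ℂ)) * z ^ P - (γ : ℂ) * (z + 1) ^ P = 0 →
        ‖z‖ ≤ ((1 + γ⁻¹) ^ ((1 : ℝ) / P) - 1)⁻¹) ∧
    (‖sharpCharRoot P γ 0‖ = ((1 + γ⁻¹) ^ ((1 : ℝ) / P) - 1)⁻¹) ∧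
    (((1 + γ⁻¹) ^ ((1 : ℝ) / P) - 1)⁻¹ < 1 ↔ γ < 1 / (2 ^ P - 1)) := by
  have hP0 : P ≠ 0 := by omega
  refine ⟨fun z ↦ by rw [add_one_pow_eq_pow_add_sum_Icc]; ring, sharp_char_eq_zero_iff hP0 hγ,
    fun j1 hj1 j2 hj2 ↦ sharpCharRoot_injOn hP0 hγ hj1 hj2, fun z hz ↦ ?_,
    norm_sharpCharRoot_zero hP0 hγ, ?_⟩
  · obtain ⟨j, -, rfl⟩ := (sharp_char_eq_zero_iff hP0 hγ z).1 hz
    exact norm_sharpCharRoot_le hP0 hγ j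
  · rw [inv_sub_one_lt_one_iff (one_lt_rpow_one_div hP0 hγ), two_lt_rpow_one_div_iff hP0 hγ]
end

section
/- Let E be a finite-dimensional real inner product space, h > 0, t_k = k·h, and let f : E × ℝ → ℝ be differentiable in x. Assume: (i) (smoothness) ‖∇_x f(x;t) − ∇_x f(y;t)‖ ≤ L·‖x − y‖ for all x,y and t ≥ 0; (ii) (strong convexity) ⟨∇_x f(x;t) − ∇_x f(y;t), x − y⟩ ≥ μ·‖x − y‖² for all x,y and t ≥ 0, with 0 < μ ≤ L; (iii) x* : ℝ → E, with ∇_x f(x*(t); t) = 0 for all t ≥ 0, is P-times differentiable with σ_P := sup_{t ≥ 0}‖(x*)^{(P)}(t)‖ < ∞, where P ≥ 1. Fix a step size α ∈ (0, 2/L), set θ := max{|1 − αμ|, |1 − αL|} < 1, and let C be an integer with C > log(2^P − 1)/log(1/θ). Define sequences by: x_{−P+1} = ⋯ = x_{−1} = x_0 ∈ E arbitrary; for k ≥ 1, x̂_k := Σ_{i=1}^{P} (−1)^{i−1} binom(P,i) x_{k−i}, and x_k := G^C(x̂_k) where G(y) := y − α∇_x f(y; t_k) is one gradient-descent step on f(·;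 t_k). Then limsup_{k→∞} ‖x̂_k − x*(t_k)‖ ≤ σ_P·h^P / (1 − (2^P − 1)·θ^C). -/
/-
Each correction step contracts towards `x*(t_k)` by the sharp factor
`θ = max{|1 - αμ|, |1 - αL|}`: writing `∇f = μ • id + H`, the map `H` is the gradient of a
convex `(L - μ)`-smooth function, hence cocoercive, and cocoercivity is what the sharp factor
needs. The prediction error splits into the previous correction errors, weighted by
`binom(P, i)` (total weight `2^P - 1`), plus the `P`-th finite difference of `x*`, which is at
most `σ_P h^P` by the mean value theorem. So the prediction errors satisfy
`ê_k ≤ (2^P - 1) θ^C max_{1 ≤ i ≤ P} ê_{k-i} + σ_P h^P`, and a windowed contraction of this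
kind with ratio `q < 1` has limit superior at most `σ_P h^P / (1 - q)`.
-/

open Finset Filter

lemma sum_Icc_one_choose_cast (P : ℕ) : ∑ i ∈ Icc 1 P, (P.choose i : ℝ) = 2 ^ P - 1 := by
  have h := congrArg (Nat.cast : ℕ → ℝ) (Nat.sum_range_choose P)
  rw [range_eq_Ico, sum_eq_sum_Ico_succ_bot P.succ_pos, zero_add, Nat.succ_eq_add_one,
    Ico_add_one_right_eq_Icc] at h
  push_cast at h
  simp only [Nat.choose_zero_right, Nat.cast_one] at h
  linarith

section FiniteDifference
variable {E : Type*} [NormedAddCommGroup E] [NormedSpace ℝ E]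

lemma norm_fwdDiff_iter_le_s11 {d : ℕ → ℝ → E} {h B y : ℝ} (hh : 0 ≤ h) {m : ℕ}
    (hd : ∀ i < m, ∀ t, HasDerivAt (d i) (d (i + 1) t) t)
    (hB : ∀ t ∈ Set.Icc y (y + m * h), ‖d m t‖ ≤ B) :
    ‖(fwdDiff h)^[m] (d 0) y‖ ≤ B * h ^ m := by
  induction m generalizing d B with
  | zero => simpa using hB y (by simp)
  | succ m ih =>
    have hstep : ∀ t ∈ Set.Icc y (y + m * h), ‖fwdDiff h (d m) t‖ ≤ B * h := by
      intro t ht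
      have hmvt := norm_image_sub_le_of_norm_deriv_le_segment' (a := t) (b := t + h)
        (fun s _ => (hd m (by omega) s).hasDerivWithinAt)
        (fun s hs => hB s ⟨by linarith [ht.1, hs.1], by push_cast; linarith [ht.2, hs.2]⟩)
        (t + h) (Set.right_mem_Icc.2 (by linarith))
      simpa [fwdDiff] using hmvt
    have := ih (d := fun i => fwdDiff h (d i)) (B := B * h)
      (fun i hi t => ((hd i (by omega) (t + h)).comp_add_const t h).sub (hd i (by omega) t))
      hstep
    rw [Function.iterate_succ_apply, pow_succ', ← mul_assoc]
    exact this

lemma sub_sum_extrapolation_eq_fwdDiff_iter (u : ℝ → E) (P : ℕ) (t h : ℝ) :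
    u t - ∑ i ∈ Icc 1 P, ((-1 : ℝ) ^ (i - 1) * (P.choose i : ℝ)) • u (t - i * h) =
      (fwdDiff h)^[P] u (t - P * h) := by
  have hsplit : ∑ i ∈ range (P + 1), ((-1 : ℝ) ^ i * (P.choose i : ℝ)) • u (t - i * h) =
      u t - ∑ i ∈ Icc 1 P, ((-1 : ℝ) ^ (i - 1) * (P.choose i : ℝ)) • u (t - i * h) := by
    rw [sum_range_succ', ← Ico_add_one_right_eq_Icc, sum_Ico_eq_sum_range, add_tsub_cancel_right,
      sub_eq_add_neg (u t), ← sum_neg_distrib, add_comm]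
    simp [add_comm 1, pow_succ]
  rw [← hsplit, fwdDiff_iter_eq_sum_shift, ← sum_range_reflect]
  refine sum_congr rfl fun i hi => ?_
  have hiP : i ≤ P := Nat.lt_succ_iff.1 (mem_range.1 hi)
  rw [add_tsub_cancel_right, Nat.choose_symm hiP, Nat.cast_sub hiP, ← Int.cast_smul_eq_zsmul ℝ,
    nsmul_eq_mul]
  push_cast
  rw [sub_mul, ← sub_add]

lemma norm_extrapolation_sub_le (x : ℤ → E) (u : ℝ → E) (P : ℕ) (k : ℤ) (h : ℝ) :
    ‖∑ i ∈ Icc 1 P, ((-1 : ℝ) ^ (i - 1) * (P.choose i : ℝ)) • x (k - i) - u (k * h)‖ ≤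
      ∑ i ∈ Icc 1 P, (P.choose i : ℝ) * ‖x (k - i) - u ((k - i : ℤ) * h)‖ +
        ‖(fwdDiff h)^[P] u (k * h - P * h)‖ := by
  rw [← sub_sum_extrapolation_eq_fwdDiff_iter]
  have hsplit :
      ∑ i ∈ Icc 1 P, ((-1 : ℝ) ^ (i - 1) * (P.choose i : ℝ)) • x (k - i) - u (k * h) =
        ∑ i ∈ Icc 1 P, ((-1 : ℝ) ^ (i - 1) * (P.choose i : ℝ)) •
            (x (k - i) - u ((k - i : ℤ) * h)) -
          (u (k * h) -
            ∑ i ∈ Icc 1 P, ((-1 : ℝ) ^ (i - 1) * (P.choose i : ℝ)) • u (k * h - i * h)) := by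
    simp only [smul_sub, sum_sub_distrib, Int.cast_sub, Int.cast_natCast, sub_mul]
    abel
  rw [hsplit]
  refine (norm_sub_le _ _).trans (add_le_add_left ((norm_sum_le _ _).trans ?_) _)
  refine sum_le_sum fun i _ => ?_
  rw [norm_smul, norm_mul, norm_pow, norm_neg, norm_one, one_pow, one_mul, Real.norm_natCast]

lemma norm_extrapolation_sub_le_of_norm_deriv_le {x : ℤ → E} {d : ℕ → ℝ → E} {P : ℕ} {k : ℤ}
    {h B : ℝ} (hh : 0 ≤ h) (hd : ∀ i < P, ∀ t, HasDerivAt (d i) (d (i + 1) t) t)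
    (hB : ∀ t ∈ Set.Icc (k * h - P * h) (k * h), ‖d P t‖ ≤ B) :
    ‖∑ i ∈ Icc 1 P, ((-1 : ℝ) ^ (i - 1) * (P.choose i : ℝ)) • x (k - i) - d 0 (k * h)‖ ≤
      ∑ i ∈ Icc 1 P, (P.choose i : ℝ) * ‖x (k - i) - d 0 ((k - i : ℤ) * h)‖ + B * h ^ P :=
  (norm_extrapolation_sub_le x (d 0) P k h).trans <|
    add_le_add le_rfl (norm_fwdDiff_iter_le_s11 hh hd (by rwa [sub_add_cancel]))

end FiniteDifference

lemma isBoundedUnder_of_window_contraction {a : ℤ → ℝ} {q r : ℝ} {N : ℤ} {P : ℕ}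
    (hq : q < 1)
    (hrec : ∀ k ≥ N, ∀ R, (∀ i ∈ Icc 1 P, a (k - i) ≤ R) → a k ≤ q * R + r) :
    IsBoundedUnder (· ≤ ·) atTop a := by
  obtain ⟨M, hM⟩ := ((Ico (N - P) N).image a).exists_le
  set R := max M (r / (1 - q))
  have hR : q * R + r ≤ R := by
    have := (div_le_iff₀ (sub_pos.2 hq)).1 (le_max_right M (r / (1 - q)))
    linarith
  have hbound : ∀ n : ℕ, a (N - P + n) ≤ R := by
    intro n
    induction n using Nat.strong_induction_on with
    | _ n ih =>
      by_cases hn : n < P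
      · exact (hM _ (mem_image_of_mem a (mem_Ico.2 ⟨by omega, by omega⟩))).trans
          (le_max_left _ _)
      · refine (hrec _ (by omega) R fun i hi => ?_).trans hR
        have hi := mem_Icc.1 hi
        simpa [show N - P + n - i = N - P + (n - i : ℕ) by omega] using ih (n - i) (by omega)
  refine isBoundedUnder_of_eventually_le (a := R) (eventually_atTop.2 ⟨N - P, fun k hk => ?_⟩)
  have := hbound (k - (N - P)).toNat
  rwa [Int.toNat_of_nonneg (by omega), add_sub_cancel] at this

lemma limsup_le_of_window_contraction {a : ℤ → ℝ} {q r : ℝ} {N : ℤ} {P : ℕ}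
    (ha : ∀ k, 0 ≤ a k) (hq : q < 1)
    (hrec : ∀ k ≥ N, ∀ R, (∀ i ∈ Icc 1 P, a (k - i) ≤ R) → a k ≤ q * R + r) :
    limsup a atTop ≤ r / (1 - q) := by
  have hbdd := isBoundedUnder_of_window_contraction hq hrec
  set β := limsup a atTop
  have hstep : ∀ ε > 0, β ≤ q * (β + ε) + r := by
    intro ε hε
    obtain ⟨K, hK⟩ :=
      eventually_atTop.1 (eventually_lt_of_limsup_lt (lt_add_of_pos_right β hε) hbdd)
    refine limsup_le_of_le (isCoboundedUnder_le_of_le atTop ha) (eventually_atTop.2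
      ⟨max N (K + P), fun k hk => hrec k (le_of_max_le_left hk) _ fun i hi => ?_⟩)
    exact (hK _ (by have := mem_Icc.1 hi; omega)).le
  have hfix : β ≤ q * β + r := le_of_forall_pos_le_add fun ε hε => by
    nlinarith [hstep ε hε, mul_pos (sub_pos.2 hq) hε]
  rw [le_div_iff₀ (sub_pos.2 hq)]
  linarith

lemma sub_le_of_hasDerivAt_le_add_mul {φ φ' : ℝ → ℝ} {b c : ℝ}
    (hφ : ∀ s, HasDerivAt φ (φ' s) s) (hle : ∀ s ∈ Set.Ioo (0 : ℝ) 1, φ' s ≤ b + c * s) :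
    φ 1 - φ 0 ≤ b + c / 2 := by
  have hψ : ∀ s, HasDerivAt (fun s => φ s - (b * s + c / 2 * s ^ 2)) (φ' s - (b + c * s)) s := by
    intro s
    refine ((hφ s).sub (((hasDerivAt_id s).const_mul b).add
      ((hasDerivAt_pow 2 s).const_mul (c / 2)))).congr_deriv ?_
    norm_num
    ring
  have := antitoneOn_of_hasDerivWithinAt_nonpos (convex_Icc 0 1)
    (fun s _ => (hψ s).continuousAt.continuousWithinAt) (fun s _ => (hψ s).hasDerivWithinAt)
    (fun s hs => by rw [interior_Icc] at hs; linarith [hle s hs])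
    (Set.left_mem_Icc.2 zero_le_one) (Set.right_mem_Icc.2 zero_le_one) zero_le_one
  simp only [mul_zero, zero_pow two_ne_zero, add_zero, sub_zero, mul_one, one_pow] at this
  linarith

section Gradient
variable {E : Type*} [NormedAddCommGroup E] [InnerProductSpace ℝ E] {F : E → ℝ} {G : E → E}

lemma hasDerivAt_apply_add_smul (hG : ∀ x, HasFDerivAt F (innerSL ℝ (G x)) x) (y d : E)
    (s : ℝ) :
    HasDerivAt (fun s : ℝ => F (y + s • d)) (inner ℝ (G (y + s • d)) d) s := by
  have hline : HasDerivAt (fun s : ℝ => y + s • d) d s := by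
    simpa using ((hasDerivAt_id s).smul_const d).const_add y
  simpa [Function.comp_def] using (hG (y + s • d)).comp_hasDerivAt s hline

lemma add_inner_le_of_monotone_gradient (hG : ∀ x, HasFDerivAt F (innerSL ℝ (G x)) x)
    (hmono : ∀ a b, 0 ≤ inner ℝ (G a - G b) (a - b)) (x y : E) :
    F y + inner ℝ (G y) (x - y) ≤ F x := by
  have := sub_le_of_hasDerivAt_le_add_mul (φ := fun s : ℝ => -F (y + s • (x - y)))
    (b := -inner ℝ (G y) (x - y)) (c := 0)
    (fun s => (hasDerivAt_apply_add_smul hG y (x - y) s).neg) fun s hs => by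
      have h := hmono (y + s • (x - y)) y
      rw [add_sub_cancel_left, inner_smul_right, inner_sub_left] at h
      nlinarith [hs.1]
  simp only [zero_smul, add_zero, one_smul, add_sub_cancel, zero_div] at this
  linarith

lemma le_add_inner_add_of_lipschitz_gradient {K : ℝ}
    (hG : ∀ x, HasFDerivAt F (innerSL ℝ (G x)) x) (hlip : ∀ a b, ‖G a - G b‖ ≤ K * ‖a - b‖)
    (x z : E) :
    F z ≤ F x + inner ℝ (G x) (z - x) + K / 2 * ‖z - x‖ ^ 2 := by
  have := sub_le_of_hasDerivAt_le_add_mul (b := inner ℝ (G x) (z - x)) (c := K * ‖z - x‖ ^ 2)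
    (hasDerivAt_apply_add_smul hG x (z - x)) fun s hs => by
      have h := hlip (x + s • (z - x)) x
      rw [add_sub_cancel_left, norm_smul, Real.norm_of_nonneg hs.1.le] at h
      have hcs := real_inner_le_norm (G (x + s • (z - x)) - G x) (z - x)
      rw [inner_sub_left] at hcs
      nlinarith [norm_nonneg (z - x)]
  simp only [zero_smul, add_zero, one_smul, add_sub_cancel] at this
  linarith

lemma norm_sub_sq_le_mul_inner_of_bounds {K : ℝ} (hK : 0 < K)
    (hlower : ∀ x y : E, F y + inner ℝ (G y) (x - y) ≤ F x)
    (hupper : ∀ x z : E, F z ≤ F x + inner ℝ (G x) (z - x) + K / 2 * ‖z - x‖ ^ 2)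
    (x y : E) :
    ‖G x - G y‖ ^ 2 ≤ K * inner ℝ (G x - G y) (x - y) := by
  -- both bounds evaluated at the gradient step `a - K⁻¹ • (G a - G b)`
  have hsharp : ∀ a b : E, F b + inner ℝ (G b) (a - b) + ‖G a - G b‖ ^ 2 / K / 2 ≤ F a := by
    intro a b
    have h1 := hlower (a - K⁻¹ • (G a - G b)) b
    have h2 := hupper a (a - K⁻¹ • (G a - G b))
    rw [sub_right_comm, inner_sub_right, inner_smul_right] at h1
    rw [sub_sub_cancel_left, inner_neg_right, inner_smul_right, norm_neg, norm_smul,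
      Real.norm_of_nonneg (inv_nonneg.2 hK.le)] at h2
    have hsq : K⁻¹ * inner ℝ (G a) (G a - G b) - K⁻¹ * inner ℝ (G b) (G a - G b) =
        ‖G a - G b‖ ^ 2 / K := by
      rw [← mul_sub, ← inner_sub_left, real_inner_self_eq_norm_sq, inv_mul_eq_div]
    have hK' : K / 2 * (K⁻¹ * ‖G a - G b‖) ^ 2 = ‖G a - G b‖ ^ 2 / K / 2 := by
      field_simp
    linarith
  have k1 := hsharp x y
  have k2 := hsharp y x
  rw [norm_sub_rev] at k2
  have hsum :
      inner ℝ (G y) (x - y) + inner ℝ (G x) (y - x) = -inner ℝ (G x - G y) (x - y) := by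
    rw [← neg_sub x y, inner_neg_right, inner_sub_left]
    ring
  have : ‖G x - G y‖ ^ 2 / K ≤ inner ℝ (G x - G y) (x - y) := by linarith
  rwa [div_le_iff₀' hK] at this

lemma norm_smul_sub_smul_le_of_cocoercive {d v : E} {c α K : ℝ} (hK : 0 ≤ K)
    (hmono : 0 ≤ inner ℝ v d) (hcoco : ‖v‖ ^ 2 ≤ K * inner ℝ v d) :
    ‖c • d - α • v‖ ≤ max |c| |c - α * K| * ‖d‖ := by
  set p := inner ℝ v d
  set M := max |c| |c - α * K|
  have hp : p ≤ K * ‖d‖ ^ 2 := by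
    have hp2 : p ^ 2 ≤ K * p * ‖d‖ ^ 2 :=
      calc p ^ 2 ≤ (‖v‖ * ‖d‖) ^ 2 := pow_le_pow_left₀ hmono (real_inner_le_norm v d) 2
        _ = ‖v‖ ^ 2 * ‖d‖ ^ 2 := mul_pow _ _ 2
        _ ≤ K * p * ‖d‖ ^ 2 := mul_le_mul_of_nonneg_right hcoco (sq_nonneg _)
    nlinarith [mul_nonneg hK (sq_nonneg ‖d‖)]
  have hexpand :
      ‖c • d - α • v‖ ^ 2 = c ^ 2 * ‖d‖ ^ 2 - 2 * (c * α) * p + α ^ 2 * ‖v‖ ^ 2 := by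
    rw [norm_sub_sq_real, inner_smul_left, inner_smul_right, norm_smul, norm_smul, mul_pow,
      mul_pow, real_inner_comm, Real.norm_eq_abs, Real.norm_eq_abs, sq_abs, sq_abs]
    simp only [conj_trivial]
    ring
  have hc : c ^ 2 ≤ M ^ 2 := sq_abs c ▸ pow_le_pow_left₀ (abs_nonneg c) (le_max_left _ _) 2
  have hcK : (c - α * K) ^ 2 ≤ M ^ 2 :=
    sq_abs (c - α * K) ▸ pow_le_pow_left₀ (abs_nonneg _) (le_max_right _ _) 2
  -- after cocoercivity the bound is affine in `p ∈ [0, K * ‖d‖ ^ 2]`, with slope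
  -- `α * (α * K - 2 * c)`: the endpoint `p = 0` gives `c ^ 2`, the other `(c - α * K) ^ 2`
  have hstep : ‖c • d - α • v‖ ^ 2 ≤ c ^ 2 * ‖d‖ ^ 2 + p * (α * (α * K - 2 * c)) := by
    nlinarith [mul_le_mul_of_nonneg_left hcoco (sq_nonneg α)]
  have hsq : ‖c • d - α • v‖ ^ 2 ≤ (M * ‖d‖) ^ 2 := by
    rcases le_total (α * (α * K - 2 * c)) 0 with hs | hs
    · nlinarith [mul_nonpos_of_nonneg_of_nonpos hmono hs,
        mul_le_mul_of_nonneg_right hc (sq_nonneg ‖d‖)]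
    · nlinarith [mul_le_mul_of_nonneg_right hp hs,
        mul_le_mul_of_nonneg_right hcK (sq_nonneg ‖d‖)]
  exact (pow_le_pow_iff_left₀ (norm_nonneg _) (by positivity) two_ne_zero).1 hsq

lemma norm_sq_le_inner_of_strongly_convex {μ L : ℝ}
    (hG : ∀ x, HasFDerivAt F (innerSL ℝ (G x)) x) (hμL : μ ≤ L)
    (hlip : ∀ a b, ‖G a - G b‖ ≤ L * ‖a - b‖)
    (hmono : ∀ a b, μ * ‖a - b‖ ^ 2 ≤ inner ℝ (G a - G b) (a - b)) (x y : E) :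
    ‖G x - G y - μ • (x - y)‖ ^ 2 ≤
      (L - μ) * inner ℝ (G x - G y - μ • (x - y)) (x - y) := by
  have hinner : ∀ a b : E, inner ℝ (G a - G b - μ • (a - b)) (a - b) =
      inner ℝ (G a - G b) (a - b) - μ * ‖a - b‖ ^ 2 := fun a b => by
    rw [inner_sub_left, real_inner_smul_left, real_inner_self_eq_norm_sq]
  rcases hμL.eq_or_lt with rfl | hlt
  · have hexpand : ‖G x - G y - μ • (x - y)‖ ^ 2 = ‖G x - G y‖ ^ 2 -
        2 * (μ * inner ℝ (G x - G y) (x - y)) + μ ^ 2 * ‖x - y‖ ^ 2 := by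
      rw [norm_sub_sq_real, real_inner_smul_right, norm_smul, mul_pow, Real.norm_eq_abs, sq_abs]
    have hcs := real_inner_le_norm (G x - G y) (x - y)
    have hl := hlip x y
    have hm := hmono x y
    have hI : inner ℝ (G x - G y) (x - y) = μ * ‖x - y‖ ^ 2 := by
      refine le_antisymm (hcs.trans ?_) hm
      nlinarith [mul_le_mul_of_nonneg_right hl (norm_nonneg (x - y))]
    rw [sub_self, zero_mul, hexpand, hI]
    nlinarith [pow_le_pow_left₀ (norm_nonneg _) hl 2]
  · -- `F - μ/2 ‖·‖²` is convex and `(L - μ)`-smooth, with gradient `G - μ • id`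
    have hGμ : ∀ z,
        HasFDerivAt (fun z => F z - μ / 2 * ‖z‖ ^ 2) (innerSL ℝ (G z - μ • z)) z := by
      intro z
      refine ((hG z).sub ((hasStrictFDerivAt_norm_sq z).hasFDerivAt.const_mul (μ / 2))).congr_fderiv
        ?_
      ext v
      simp only [map_sub, map_smul, sub_apply, coe_innerSL_apply,
        smul_apply, smul_eq_mul, nsmul_eq_mul, Nat.cast_ofNat]
      ring
    have hlower := add_inner_le_of_monotone_gradient hGμ fun a b => by
      rw [show G a - μ • a - (G b - μ • b) = G a - G b - μ • (a - b) by module, hinner]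
      linarith [hmono a b]
    have hupper : ∀ a z : E, F z - μ / 2 * ‖z‖ ^ 2 ≤ F a - μ / 2 * ‖a‖ ^ 2 +
        inner ℝ (G a - μ • a) (z - a) + (L - μ) / 2 * ‖z - a‖ ^ 2 := fun a z => by
      have hsq : ‖z‖ ^ 2 = ‖a‖ ^ 2 + 2 * inner ℝ a (z - a) + ‖z - a‖ ^ 2 := by
        rw [← norm_add_sq_real, add_sub_cancel]
      rw [hsq, inner_sub_left, real_inner_smul_left]
      linarith [le_add_inner_add_of_lipschitz_gradient hG hlip a z]
    have := norm_sub_sq_le_mul_inner_of_bounds (sub_pos.2 hlt) hlower hupper x y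
    rwa [show G x - μ • x - (G y - μ • y) = G x - G y - μ • (x - y) by module] at this

lemma lipschitzWith_gradient_step {μ L : ℝ}
    (hG : ∀ x, HasFDerivAt F (innerSL ℝ (G x)) x) (hμL : μ ≤ L)
    (hlip : ∀ a b, ‖G a - G b‖ ≤ L * ‖a - b‖)
    (hmono : ∀ a b, μ * ‖a - b‖ ^ 2 ≤ inner ℝ (G a - G b) (a - b)) (α : ℝ) :
    LipschitzWith (max |1 - α * μ| |1 - α * L|).toNNReal (fun y => y - α • G y) := by
  refine LipschitzWith.of_dist_le_mul fun y x => ?_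
  rw [dist_eq_norm, dist_eq_norm, Real.coe_toNNReal _ (by positivity),
    show y - α • G y - (x - α • G x) =
      (1 - α * μ) • (y - x) - α • (G y - G x - μ • (y - x)) by module,
    show 1 - α * L = 1 - α * μ - α * (L - μ) by ring]
  refine norm_smul_sub_smul_le_of_cocoercive (sub_nonneg.2 hμL) ?_
    (norm_sq_le_inner_of_strongly_convex hG hμL hlip hmono y x)
  rw [inner_sub_left, real_inner_smul_left, real_inner_self_eq_norm_sq]
  linarith [hmono y x]

lemma norm_iterate_gradient_step_sub_le {μ L α : ℝ} {xstar : E}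
    (hG : ∀ x, HasFDerivAt F (innerSL ℝ (G x)) x) (hμL : μ ≤ L)
    (hlip : ∀ a b, ‖G a - G b‖ ≤ L * ‖a - b‖)
    (hmono : ∀ a b, μ * ‖a - b‖ ^ 2 ≤ inner ℝ (G a - G b) (a - b)) (hstat : G xstar = 0)
    (n : ℕ) (y : E) :
    ‖(fun y => y - α • G y)^[n] y - xstar‖ ≤
      max |1 - α * μ| |1 - α * L| ^ n * ‖y - xstar‖ := by
  have hfix : (fun y => y - α • G y) xstar = xstar := by simp [hstat]
  have := ((lipschitzWith_gradient_step hG hμL hlip hmono α).iterate n).dist_le_mul y xstar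
  rwa [Function.iterate_fixed (f := fun y => y - α • G y) hfix, dist_eq_norm, dist_eq_norm,
    NNReal.coe_pow, Real.coe_toNNReal _ (by positivity)] at this

end Gradient

lemma max_abs_one_sub_mul_lt_one {α μ L : ℝ} (hα : 0 < α) (hμ : 0 < μ) (hμL : μ ≤ L)
    (hαL : α < 2 / L) : max |1 - α * μ| |1 - α * L| < 1 := by
  have hαL' : α * L < 2 := (lt_div_iff₀ (hμ.trans_le hμL)).1 hαL
  have hαμ : 0 < α * μ := mul_pos hα hμ
  have : α * μ ≤ α * L := mul_le_mul_of_nonneg_left hμL hα.le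
  rw [max_lt_iff, abs_lt, abs_lt]
  refine ⟨⟨?_, ?_⟩, ?_, ?_⟩ <;> linarith

lemma mul_pow_lt_one_of_log_div_log_lt {m θ : ℝ} {C : ℕ} (hm : 0 ≤ m) (hθ0 : 0 ≤ θ)
    (hθ1 : θ < 1) (hC : Real.log m / Real.log (1 / θ) < C) : m * θ ^ C < 1 := by
  rcases hm.eq_or_lt with rfl | hm
  · simp
  rcases hθ0.eq_or_lt with rfl | hθ
  · have hC0 : C ≠ 0 := by rintro rfl; simp at hC
    simp [hC0]
  have hlog : 0 < Real.log (1 / θ) := Real.log_pos ((one_lt_div hθ).2 hθ1)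
  rw [div_lt_iff₀ hlog, ← Real.log_pow, Real.log_lt_log_iff hm (by positivity), one_div,
    inv_pow] at hC
  exact (mul_lt_mul_of_pos_right hC (pow_pos hθ C)).trans_eq
    (inv_mul_cancel₀ (pow_ne_zero _ hθ.ne'))

theorem sharp_tracking_error_strongly_convex_general
    {E : Type*} [NormedAddCommGroup E] [InnerProductSpace ℝ E]
    (h : ℝ) (hh : 0 < h)
    (f : E → ℝ → ℝ) (g : E → ℝ → E)
    (hgrad : ∀ (x : E) (t : ℝ), HasFDerivAt (fun y => f y t) (innerSL ℝ (g x t)) x)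
    (μ L : ℝ) (hμ : 0 < μ) (hμL : μ ≤ L)
    (hlip : ∀ (x y : E) (t : ℝ), 0 ≤ t → ‖g x t - g y t‖ ≤ L * ‖x - y‖)
    (hmono : ∀ (x y : E) (t : ℝ), 0 ≤ t →
      μ * ‖x - y‖ ^ 2 ≤ (inner ℝ (g x t - g y t) (x - y) : ℝ))
    (P : ℕ)
    (xs : ℝ → E) (d : ℕ → ℝ → E) (hd0 : d 0 = xs)
    (hderiv : ∀ i < P, ∀ t : ℝ, HasDerivAt (d i) (d (i + 1) t) t)
    (hstat : ∀ t : ℝ, 0 ≤ t → g (xs t) t = 0)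
    (σP : ℝ) (hσP : ∀ t : ℝ, 0 ≤ t → ‖d P t‖ ≤ σP)
    (α : ℝ) (hα0 : 0 < α) (hα2 : α < 2 / L)
    (θ : ℝ) (hθ : θ = max |1 - α * μ| |1 - α * L|)
    (C : ℕ) (hC : Real.log (2 ^ P - 1) / Real.log (1 / θ) < C)
    (xc xhat : ℤ → E)
    (hpred : ∀ k : ℤ, 1 ≤ k → xhat k = ∑ i ∈ Finset.Icc 1 P,
      ((-1 : ℝ) ^ (i - 1) * (P.choose i : ℝ)) • xc (k - i))
    (hcorr : ∀ k : ℤ, 1 ≤ k →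
      xc k = (fun y => y - α • g y ((k : ℝ) * h))^[C] (xhat k)) :
    Filter.limsup (fun k : ℤ => ‖xhat k - xs ((k : ℝ) * h)‖) Filter.atTop
      ≤ σP * h ^ P / (1 - (2 ^ P - 1) * θ ^ C) := by
  have hθ0 : 0 ≤ θ := hθ ▸ (abs_nonneg _).trans (le_max_left _ _)
  have hq : (2 ^ P - 1) * θ ^ C < 1 :=
    mul_pow_lt_one_of_log_div_log_lt (sub_nonneg.2 (one_le_pow₀ one_le_two)) hθ0
      (hθ ▸ max_abs_one_sub_mul_lt_one hα0 hμ hμL hα2) hC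
  have htime : ∀ k : ℤ, 1 ≤ k → 0 ≤ (k : ℝ) * h := fun k hk =>
    mul_nonneg (by exact_mod_cast zero_le_one.trans hk) hh.le
  have hcorr_err : ∀ k : ℤ, 1 ≤ k →
      ‖xc k - xs (k * h)‖ ≤ θ ^ C * ‖xhat k - xs (k * h)‖ := fun k hk => by
    rw [hcorr k hk, hθ]
    exact norm_iterate_gradient_step_sub_le (hgrad · _) hμL (fun x y => hlip x y _ (htime k hk))
      (fun x y => hmono x y _ (htime k hk)) (hstat _ (htime k hk)) C _
  have hpred_err : ∀ k : ℤ, P + 1 ≤ k → ‖xhat k - xs (k * h)‖ ≤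
      ∑ i ∈ Icc 1 P, (P.choose i : ℝ) * ‖xc (k - i) - xs ((k - i : ℤ) * h)‖ + σP * h ^ P :=
    fun k hk => by
      rw [hpred k (by omega), ← hd0]
      refine norm_extrapolation_sub_le_of_norm_deriv_le hh.le hderiv fun s hs => hσP s ?_
      refine le_trans ?_ hs.1
      rw [← sub_mul]
      exact mul_nonneg (by exact_mod_cast (by omega : (0 : ℤ) ≤ k - P)) hh.le
  refine limsup_le_of_window_contraction (N := P + 1) (P := P) (fun k => norm_nonneg _) hq
    fun k hk R hR => (hpred_err k hk).trans ?_
  calc ∑ i ∈ Icc 1 P, (P.choose i : ℝ) * ‖xc (k - i) - xs ((k - i : ℤ) * h)‖ + σP * h ^ P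
      ≤ ∑ i ∈ Icc 1 P, (P.choose i : ℝ) * (θ ^ C * R) + σP * h ^ P := by
        gcongr with i hi
        exact (hcorr_err _ (by have := mem_Icc.1 hi; omega)).trans
          (mul_le_mul_of_nonneg_left (hR i hi) (pow_nonneg hθ0 C))
    _ = (2 ^ P - 1) * θ ^ C * R + σP * h ^ P := by
        rw [← sum_mul, sum_Icc_one_choose_cast]
        ring

/-- Asymptotic tracking error of the SHARP algorithm (strongly convex case,
acceptance threshold `v = ∞`): with order-`P` Lagrange extrapolation as
prediction and `C` gradient-descent correction steps with step size
`α ∈ (0, 2/L)`, where `C > log(2^P−1)/log(1/θ)` and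
`θ = max{|1−αμ|, |1−αL|}`, one has
`limsup_k ‖x̂_k − x*(t_k)‖ ≤ σ_P h^P / (1 − (2^P−1)θ^C)`. -/
theorem sharp_tracking_error_strongly_convex
    {E : Type*} [NormedAddCommGroup E] [InnerProductSpace ℝ E]
    [FiniteDimensional ℝ E]
    (h : ℝ) (hh : 0 < h)
    (f : E → ℝ → ℝ) (g : E → ℝ → E)
    (hgrad : ∀ (x : E) (t : ℝ), HasFDerivAt (fun y => f y t) (innerSL ℝ (g x t)) x)
    (μ L : ℝ) (hμ : 0 < μ) (hμL : μ ≤ L)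
    (hlip : ∀ (x y : E) (t : ℝ), 0 ≤ t → ‖g x t - g y t‖ ≤ L * ‖x - y‖)
    (hmono : ∀ (x y : E) (t : ℝ), 0 ≤ t →
      μ * ‖x - y‖ ^ 2 ≤ (inner ℝ (g x t - g y t) (x - y) : ℝ))
    (P : ℕ) (hP : 1 ≤ P)
    (xs : ℝ → E) (d : ℕ → ℝ → E) (hd0 : d 0 = xs)
    (hderiv : ∀ i < P, ∀ t : ℝ, HasDerivAt (d i) (d (i + 1) t) t)
    (hstat : ∀ t : ℝ, 0 ≤ t → g (xs t) t = 0)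
    (σP : ℝ) (hσP : ∀ t : ℝ, 0 ≤ t → ‖d P t‖ ≤ σP)
    (α : ℝ) (hα0 : 0 < α) (hα2 : α < 2 / L)
    (θ : ℝ) (hθ : θ = max |1 - α * μ| |1 - α * L|)
    (C : ℕ) (hC : Real.log (2 ^ P - 1) / Real.log (1 / θ) < C)
    (xc xhat : ℤ → E)
    (hinit : ∀ k : ℤ, k ≤ 0 → xc k = xc 0)
    (hpred : ∀ k : ℤ, 1 ≤ k → xhat k = ∑ i ∈ Finset.Icc 1 P,
      ((-1 : ℝ) ^ (i - 1) * (P.choose i : ℝ)) • xc (k - i))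
    (hcorr : ∀ k : ℤ, 1 ≤ k →
      xc k = (fun y => y - α • g y ((k : ℝ) * h))^[C] (xhat k)) :
    Filter.limsup (fun k : ℤ => ‖xhat k - xs ((k : ℝ) * h)‖) Filter.atTop
      ≤ σP * h ^ P / (1 - (2 ^ P - 1) * θ ^ C) :=
  sharp_tracking_error_strongly_convex_general h hh f g hgrad μ L hμ hμL hlip hmono P xs d hd0
    hderiv hstat σP hσP α hα0 hα2 θ hθ C hC xc xhat hpred hcorr
end

section
/- Let E be a real inner product space (or ℝⁿ) and let f : E → ℝ be differentiable with gradient ∇f that is L-Lipschitz (‖∇f(x) − ∇f(y)‖ ≤ L‖x − y‖), with finite infimum f* := inf f, and μ-Polyak–Łojasiewicz: (1/(2μ))‖∇f(x)‖² ≥ f(x) − f* for all x, where 0 < μ ≤ L. Fix α ∈ (0, 2/L) and define gradient-descent iterates x^{i+1} = x^i − α∇f(x^i) from an arbitrary x^0. Set θ := 1 − αμ(2 − αL), so 0 ≤ θ < 1. Then for all i ≥ 0: ‖x^{i+1} − x^i‖² ≤ (2α/(2 − αL))·θ^i·(f(x^0) − f*), and consequently for every C ≥ 0 the tail sum satisfies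 Σ_{i=C}^{∞} ‖x^{i+1} − x^i‖ ≤ (1/(1 − √θ))·√(2α/(2 − αL))·θ^{C/2}·√(f(x^0) − f*); in particular the iterates form a Cauchy sequence. -/
/-!
Comparing `f` along a segment with its quadratic model gives the descent lemma
`f y ≤ f x + ⟪∇f x, y - x⟫ + L/2 ‖y - x‖²`, so a gradient step of size `α` lowers `f` by at
least `α(2 - αL)/2 ‖∇f‖²`. By the PL inequality this contracts the gap `f - f*` by the factor
`θ`, and since the step itself is `α ∇f`, its squared length is bounded by the decrease, hence
by a multiple of `θ^i`. Taking square roots bounds the steps by a geometric sequence of ratio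
`√θ < 1`, whose tails sum in closed form and which makes the iterates Cauchy.
-/

theorem tsum_norm_sub_le_of_norm_sub_le_geometric {G : Type*} [SeminormedAddCommGroup G]
    {x : ℕ → G} {K r : ℝ} (hr0 : 0 ≤ r) (hr1 : r < 1) (h : ∀ i, ‖x (i + 1) - x i‖ ≤ K * r ^ i)
    (C : ℕ) : ∑' i, ‖x (C + i + 1) - x (C + i)‖ ≤ K * r ^ C / (1 - r) := by
  have hgeo : HasSum (fun i => K * r ^ C * r ^ i) (K * r ^ C / (1 - r)) := by
    simpa only [div_eq_mul_inv] using (hasSum_geometric_of_lt_one hr0 hr1).mul_left (K * r ^ C)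
  have hshift (i : ℕ) : ‖x (C + i + 1) - x (C + i)‖ ≤ K * r ^ C * r ^ i := by
    simpa only [pow_add, mul_assoc] using h (C + i)
  exact (Summable.tsum_le_tsum hshift
    (hgeo.summable.of_nonneg_of_le (fun _ => norm_nonneg _) hshift) hgeo.summable).trans_eq
    hgeo.tsum_eq

section GradientDescent

variable {E : Type*} [NormedAddCommGroup E] [InnerProductSpace ℝ E] {f : E → ℝ} {g : E → E}
  {L μ fstar α : ℝ} {x : ℕ → E}

theorem le_add_inner_add_sq_of_lipschitz_gradient
    (hgrad : ∀ x, HasFDerivAt f (innerSL ℝ (g x)) x)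
    (hlip : ∀ x y, ‖g x - g y‖ ≤ L * ‖x - y‖) (x y : E) :
    f y ≤ f x + inner ℝ (g x) (y - x) + L / 2 * ‖y - x‖ ^ 2 := by
  set v := y - x
  have hline (t : ℝ) : HasDerivAt (fun t : ℝ => f (x + t • v)) (inner ℝ (g (x + t • v)) v) t := by
    have hl : HasDerivAt (fun t : ℝ => x + t • v) v t := by
      simpa using ((hasDerivAt_id t).smul_const v).const_add x
    simpa [Function.comp_def] using (hgrad _).comp_hasDerivAt t hl
  have hmodel (t : ℝ) :
      HasDerivAt (fun t : ℝ => f x + t * inner ℝ (g x) v + L / 2 * ‖v‖ ^ 2 * t ^ 2)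
        (inner ℝ (g x) v + L * ‖v‖ ^ 2 * t) t := by
    refine ((((hasDerivAt_id' t).mul_const (inner ℝ (g x) v)).const_add (f x)).add
      ((hasDerivAt_pow 2 t).const_mul (L / 2 * ‖v‖ ^ 2))).congr_deriv ?_
    push_cast
    ring
  have hslope (t : ℝ) (ht : 0 ≤ t) :
      inner ℝ (g (x + t • v)) v ≤ inner ℝ (g x) v + L * ‖v‖ ^ 2 * t := by
    calc inner ℝ (g (x + t • v)) v = inner ℝ (g x) v + inner ℝ (g (x + t • v) - g x) v := by
          rw [inner_sub_left]; ring
      _ ≤ inner ℝ (g x) v + ‖g (x + t • v) - g x‖ * ‖v‖ := by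
          gcongr; exact real_inner_le_norm _ _
      _ ≤ inner ℝ (g x) v + L * ‖t • v‖ * ‖v‖ := by
          gcongr; simpa using hlip (x + t • v) x
      _ = inner ℝ (g x) v + L * ‖v‖ ^ 2 * t := by
          rw [norm_smul, Real.norm_of_nonneg ht]; ring
  have hcompare := image_le_of_deriv_right_le_deriv_boundary (a := 0) (b := 1)
    (fun t _ => (hline t).continuousAt.continuousWithinAt) (fun t _ => (hline t).hasDerivWithinAt)
    (by simp) (fun t _ => (hmodel t).continuousAt.continuousWithinAt)
    (fun t _ => (hmodel t).hasDerivWithinAt) (fun t ht => hslope t ht.1)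
    (Set.right_mem_Icc.2 zero_le_one)
  simpa [v] using hcompare

theorem apply_sub_smul_gradient_le (hgrad : ∀ x, HasFDerivAt f (innerSL ℝ (g x)) x)
    (hlip : ∀ x y, ‖g x - g y‖ ≤ L * ‖x - y‖) (α : ℝ) (x : E) :
    f (x - α • g x) ≤ f x - α * (2 - α * L) / 2 * ‖g x‖ ^ 2 := by
  have h := le_add_inner_add_sq_of_lipschitz_gradient hgrad hlip x (x - α • g x)
  rw [sub_sub_cancel_left, inner_neg_right, real_inner_smul_right, real_inner_self_eq_norm_sq,
    norm_neg, norm_smul, Real.norm_eq_abs, mul_pow, sq_abs] at h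
  linarith

theorem gradient_descent_gap_le_pow (hgrad : ∀ x, HasFDerivAt f (innerSL ℝ (g x)) x)
    (hlip : ∀ x y, ‖g x - g y‖ ≤ L * ‖x - y‖) (hμ : 0 < μ)
    (hpl : ∀ x, f x - fstar ≤ 1 / (2 * μ) * ‖g x‖ ^ 2)
    (hα : 0 ≤ α * (2 - α * L)) (hθ : 0 ≤ 1 - α * μ * (2 - α * L))
    (hiter : ∀ i, x (i + 1) = x i - α • g (x i)) (i : ℕ) :
    f (x i) - fstar ≤ (1 - α * μ * (2 - α * L)) ^ i * (f (x 0) - fstar) := by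
  induction i with
  | zero => simp
  | succ n ih =>
    have hdesc := apply_sub_smul_gradient_le hgrad hlip α (x n)
    have hpl_n : 2 * μ * (f (x n) - fstar) ≤ ‖g (x n)‖ ^ 2 := by
      have := hpl (x n)
      rwa [one_div_mul_eq_div, le_div_iff₀ (by positivity), mul_comm] at this
    calc f (x (n + 1)) - fstar ≤ (1 - α * μ * (2 - α * L)) * (f (x n) - fstar) := by
          rw [hiter]; nlinarith [mul_le_mul_of_nonneg_left hpl_n hα]
      _ ≤ (1 - α * μ * (2 - α * L)) * ((1 - α * μ * (2 - α * L)) ^ n * (f (x 0) - fstar)) := by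
          gcongr
      _ = (1 - α * μ * (2 - α * L)) ^ (n + 1) * (f (x 0) - fstar) := by ring

theorem gradient_descent_norm_sub_sq_le (hgrad : ∀ x, HasFDerivAt f (innerSL ℝ (g x)) x)
    (hlip : ∀ x y, ‖g x - g y‖ ≤ L * ‖x - y‖) (hμ : 0 < μ)
    (hpl : ∀ x, f x - fstar ≤ 1 / (2 * μ) * ‖g x‖ ^ 2) (hlb : ∀ y, fstar ≤ f y)
    (hα0 : 0 < α) (hαL : α * L < 2) (hθ : 0 ≤ 1 - α * μ * (2 - α * L))
    (hiter : ∀ i, x (i + 1) = x i - α • g (x i)) (i : ℕ) :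
    ‖x (i + 1) - x i‖ ^ 2
      ≤ 2 * α / (2 - α * L) * (1 - α * μ * (2 - α * L)) ^ i * (f (x 0) - fstar) := by
  have h2αL : 0 < 2 - α * L := by linarith
  have hnorm : ‖x (i + 1) - x i‖ ^ 2
      = 2 * α / (2 - α * L) * (α * (2 - α * L) / 2 * ‖g (x i)‖ ^ 2) := by
    rw [hiter, sub_sub_cancel_left, norm_neg, norm_smul, Real.norm_of_nonneg hα0.le]
    field_simp
  have hdecrease : α * (2 - α * L) / 2 * ‖g (x i)‖ ^ 2 ≤ f (x i) - f (x (i + 1)) := by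
    rw [hiter]
    linarith [apply_sub_smul_gradient_le hgrad hlip α (x i)]
  calc ‖x (i + 1) - x i‖ ^ 2 ≤ 2 * α / (2 - α * L) * (f (x i) - fstar) := by
        rw [hnorm]; gcongr; linarith [hlb (x (i + 1))]
    _ ≤ 2 * α / (2 - α * L) * ((1 - α * μ * (2 - α * L)) ^ i * (f (x 0) - fstar)) := by
        gcongr; exact gradient_descent_gap_le_pow hgrad hlip hμ hpl (by positivity) hθ hiter i
    _ = 2 * α / (2 - α * L) * (1 - α * μ * (2 - α * L)) ^ i * (f (x 0) - fstar) := by ring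

end GradientDescent

/-- Gradient descent on an `L`-smooth `μ`-PL function: step norms decay
geometrically, `‖x^{i+1} − x^i‖² ≤ (2α/(2−αL))θ^i(f(x⁰) − f*)` with
`θ = 1 − αμ(2−αL)`, the tail sums satisfy
`Σ_{i≥C}‖x^{i+1} − x^i‖ ≤ (1/(1−√θ))√(2α/(2−αL))·θ^{C/2}·√(f(x⁰) − f*)`,
and the iterates form a Cauchy sequence. -/
theorem gd_pl_step_norm_decay_and_cauchy
    {E : Type*} [NormedAddCommGroup E] [InnerProductSpace ℝ E]
    (f : E → ℝ) (g : E → E)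
    (hgrad : ∀ x : E, HasFDerivAt f (innerSL ℝ (g x)) x)
    (L μ : ℝ) (hμ : 0 < μ) (hμL : μ ≤ L)
    (hlip : ∀ x y : E, ‖g x - g y‖ ≤ L * ‖x - y‖)
    (fstar : ℝ) (hfstar : IsGLB (Set.range f) fstar)
    (hpl : ∀ x : E, f x - fstar ≤ 1 / (2 * μ) * ‖g x‖ ^ 2)
    (α : ℝ) (hα0 : 0 < α) (hα2 : α < 2 / L)
    (x : ℕ → E) (hiter : ∀ i : ℕ, x (i + 1) = x i - α • g (x i)) :
    (∀ i : ℕ, ‖x (i + 1) - x i‖ ^ 2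
        ≤ 2 * α / (2 - α * L) * (1 - α * μ * (2 - α * L)) ^ i * (f (x 0) - fstar)) ∧
    (∀ C : ℕ, ∑' i : ℕ, ‖x (C + i + 1) - x (C + i)‖
        ≤ 1 / (1 - Real.sqrt (1 - α * μ * (2 - α * L)))
          * Real.sqrt (2 * α / (2 - α * L))
          * Real.sqrt (1 - α * μ * (2 - α * L)) ^ C
          * Real.sqrt (f (x 0) - fstar)) ∧
    CauchySeq x := by
  have hL : 0 < L := hμ.trans_le hμL
  have hαL : α * L < 2 := by rwa [lt_div_iff₀ hL] at hα2
  set θ := 1 - α * μ * (2 - α * L)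
  set A := 2 * α / (2 - α * L)
  have hθ0 : 0 ≤ θ := by
    have hθ_eq : θ = (1 - α * μ) ^ 2 + α ^ 2 * μ * (L - μ) := by ring
    have := sub_nonneg.2 hμL
    rw [hθ_eq]
    positivity
  have hθ1 : √θ < 1 := by
    rw [Real.sqrt_lt' one_pos, one_pow]
    nlinarith [mul_pos hα0 hμ]
  have hlb (y : E) : fstar ≤ f y := hfstar.1 ⟨y, rfl⟩
  have hstep_sq := gradient_descent_norm_sub_sq_le hgrad hlip hμ hpl hlb hα0 hαL hθ0 hiter
  have hstep (i : ℕ) : ‖x (i + 1) - x i‖ ≤ √A * √(f (x 0) - fstar) * √θ ^ i := by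
    have hsq : (√A * √(f (x 0) - fstar) * √θ ^ i) ^ 2 = A * θ ^ i * (f (x 0) - fstar) := by
      rw [mul_pow, mul_pow, ← pow_mul, mul_comm i, pow_mul, Real.sq_sqrt hθ0,
        Real.sq_sqrt (div_nonneg (by positivity) (by linarith)),
        Real.sq_sqrt (by linarith [hlb (x 0)])]
      ring
    exact (pow_le_pow_iff_left₀ (norm_nonneg _) (by positivity) two_ne_zero).1 (hsq ▸ hstep_sq i)
  refine ⟨hstep_sq, fun C => ?_, cauchySeq_of_le_geometric (√θ) (√A * √(f (x 0) - fstar)) hθ1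
    fun n => ?_⟩
  · exact (tsum_norm_sub_le_of_norm_sub_le_geometric (Real.sqrt_nonneg θ) hθ1 hstep C).trans_eq
      (by ring)
  · rw [dist_comm, dist_eq_norm]
    exact hstep n
end

section
/- Let E be ℝⁿ (a finite-dimensional real inner product space) and let f : E × ℝ → ℝ with f(·;t) differentiable for every t ≥ 0. Assume there exist μ > 0, L_{2,0} > 0, L_{1,1} ≥ 0 such that for all t, s ≥ 0 and all x, y ∈ E: (i) ‖∇_x f(x;t) − ∇_x f(y;t)‖ ≤ L_{2,0}‖x − y‖; (ii) f(·;t) is μ-PL on E, i.e., (1/(2μ))‖∇_x f(x;t)‖² ≥ f(x;t) − f*(t), where f*(t) := inf_y f(y;t); (iii) the solution set X*(t) := argmin_x f(x;t) is nonempty; (iv) ‖∇_x f(x;s) − ∇_x f(x;t)‖ ≤ L_{1,1}|s − t|. Then for all s, t ≥ 0, the Hausdorff distance satisfies d_H(X*(s), X*(t)) ≤ (L_{1,1}/μ)·|s − t|. -/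
/-! Along a gradient step `x ↦ x - α ∇f(x)` with `Lα < 1`, the descent lemma, PL and concavity of
`√` make `√(f - f*)` drop by at least `(1 - Lα)√(μ/2)` times the distance travelled. Hence
gradient descent converges, to a stationary point, which PL makes a minimizer, at distance at
most `√(f x - f*) / ((1 - Lα)√(μ/2))` from `x`; letting `α → 0` gives quadratic growth
`μ/2 · dist(x, X*)² ≤ f x - f*`, and together with PL the error bound `μ · dist(x, X*) ≤ ‖∇f(x)‖`.
For `x ∈ X*(s)` the gradient `∇f(x;s)` vanishes, so
`dist(x, X*(t)) ≤ ‖∇f(x;t) - ∇f(x;s)‖ / μ ≤ (L₁₁/μ)|s - t|`, and symmetrically. -/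

open Filter Topology Metric

theorem Real.sub_div_two_sqrt_le_sqrt_sub_sqrt {u v : ℝ} (hv : 0 ≤ v) (hvu : v ≤ u) :
    (u - v) / (2 * √u) ≤ √u - √v := by
  rcases (Real.sqrt_nonneg u).eq_or_lt with hu | hu
  · rw [← hu, mul_zero, div_zero]
    linarith [Real.sqrt_le_sqrt hvu]
  · have hsv : √v ≤ √u := Real.sqrt_le_sqrt hvu
    rw [div_le_iff₀ (by positivity)]
    nlinarith [Real.sq_sqrt hv, Real.sq_sqrt (hv.trans hvu), Real.sqrt_nonneg v]

theorem exists_tendsto_mul_dist_le_of_mul_dist_succ_le {α : Type*} [PseudoMetricSpace α]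
    [CompleteSpace α] {x : ℕ → α} {V : ℕ → ℝ} {c : ℝ} (hc : 0 < c) (hV : ∀ n, 0 ≤ V n)
    (h : ∀ n, c * dist (x n) (x (n + 1)) ≤ V n - V (n + 1)) :
    ∃ a, Tendsto x atTop (𝓝 a) ∧ c * dist (x 0) a ≤ V 0 := by
  set d : ℕ → ℝ := fun n => (V n - V (n + 1)) / c
  have hdist : ∀ n, dist (x n) (x n.succ) ≤ d n := fun n => (le_div_iff₀' hc).2 (h n)
  have hd : ∀ n, 0 ≤ d n := fun n => dist_nonneg.trans (hdist n)
  have hsum : ∀ n, ∑ i ∈ Finset.range n, d i ≤ V 0 / c := fun n => by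
    rw [← Finset.sum_div, Finset.sum_range_sub' V n]
    exact div_le_div_of_nonneg_right (sub_le_self _ (hV n)) hc.le
  obtain ⟨a, ha⟩ := cauchySeq_tendsto_of_complete
    (cauchySeq_of_dist_le_of_summable d hdist (summable_of_sum_range_le hd hsum))
  refine ⟨a, ha, (le_div_iff₀' hc).1 ?_⟩
  exact (dist_le_tsum_of_dist_le_of_tendsto₀ d hdist (summable_of_sum_range_le hd hsum) ha).trans
    (Real.tsum_le_of_sum_range_le hd hsum)

theorem eq_zero_of_forall_le_of_hasFDerivAt_innerSL {E : Type*} [NormedAddCommGroup E]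
    [InnerProductSpace ℝ E] {f : E → ℝ} {x v : E} (hmin : ∀ y, f x ≤ f y)
    (hf : HasFDerivAt f (innerSL ℝ v) x) : v = 0 := by
  have h : innerSL ℝ v = 0 := IsLocalMin.hasFDerivAt_eq_zero (.of_forall hmin) hf
  rw [← norm_eq_zero, ← innerSL_apply_norm ℝ v, h, norm_zero]

section GradientDescent

variable {E : Type*} [NormedAddCommGroup E] {f : E → ℝ} {g : E → E}

theorem pl_forall_le_of_gradient_eq_zero {μ : ℝ}
    (hpl : ∀ x, f x - (⨅ y, f y) ≤ 1 / (2 * μ) * ‖g x‖ ^ 2) (hbdd : BddBelow (Set.range f))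
    {x : E} (hx : g x = 0) (y : E) : f x ≤ f y := by
  have := hpl x
  rw [hx, norm_zero] at this
  linarith [ciInf_le hbdd y]

variable [InnerProductSpace ℝ E]

theorem apply_sub_smul_le_of_lipschitz_gradient
    (hgrad : ∀ x, HasFDerivAt f (innerSL ℝ (g x)) x) {L : ℝ} (hL : 0 ≤ L)
    (hlip : ∀ x y, ‖g x - g y‖ ≤ L * ‖x - y‖) (x : E) {α : ℝ} (hα : 0 ≤ α) :
    f (x - α • g x) ≤ f x - α * (1 - L * α) * ‖g x‖ ^ 2 := by
  set y := x - α • g x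
  have hyx : y - x = -(α • g x) := by simp [y]
  have hr : ‖y - x‖ = α * ‖g x‖ := by rw [hyx, norm_neg, norm_smul, Real.norm_of_nonneg hα]
  have hmvt : ‖f y - f x - innerSL ℝ (g x) (y - x)‖ ≤ L * ‖y - x‖ * ‖y - x‖ := by
    refine Convex.norm_image_sub_le_of_norm_hasFDerivWithin_le'
      (fun z _ => (hgrad z).hasFDerivWithinAt) (fun z hz => ?_) (convex_closedBall x ‖y - x‖)
      (mem_closedBall_self (norm_nonneg _)) (by simp [dist_eq_norm])
    rw [← map_sub, innerSL_apply_norm]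
    exact (hlip z x).trans (by gcongr; rwa [mem_closedBall, dist_eq_norm] at hz)
  have hinner : innerSL ℝ (g x) (y - x) = -(α * ‖g x‖ ^ 2) := by
    rw [hyx, map_neg, innerSL_apply_apply, real_inner_smul_right, real_inner_self_eq_norm_sq]
  rw [hinner, hr, Real.norm_eq_abs] at hmvt
  linarith [(abs_le.1 hmvt).2]

theorem pl_mul_dist_gradient_step_le (hgrad : ∀ x, HasFDerivAt f (innerSL ℝ (g x)) x)
    {L μ : ℝ} (hL : 0 ≤ L) (hμ : 0 < μ) (hlip : ∀ x y, ‖g x - g y‖ ≤ L * ‖x - y‖)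
    (hpl : ∀ x, f x - (⨅ y, f y) ≤ 1 / (2 * μ) * ‖g x‖ ^ 2) (hbdd : BddBelow (Set.range f))
    (x : E) {α : ℝ} (hα : 0 < α) (hLα : L * α < 1) :
    (1 - L * α) * √(μ / 2) * dist x (x - α • g x) ≤
      √(f x - ⨅ y, f y) - √(f (x - α • g x) - ⨅ y, f y) := by
  set D : E → ℝ := fun z => f z - ⨅ y, f y
  set y := x - α • g x
  have hD : ∀ z, 0 ≤ D z := fun z => sub_nonneg.2 (ciInf_le hbdd z)
  have hdist : dist x y = α * ‖g x‖ := by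
    rw [dist_eq_norm, sub_sub_cancel, norm_smul, Real.norm_of_nonneg hα.le]
  rcases (norm_nonneg (g x)).eq_or_lt with hg | hg
  · have hy : y = x := by simp [y, norm_eq_zero.1 hg.symm]
    rw [hdist, ← hg, mul_zero, mul_zero, hy, sub_self]
  have hdesc : α * (1 - L * α) * ‖g x‖ ^ 2 ≤ D x - D y := by
    have := apply_sub_smul_le_of_lipschitz_gradient hgrad hL hlip x hα.le
    simp only [D]
    linarith
  have hgain : 0 < α * (1 - L * α) * ‖g x‖ ^ 2 := by
    have := sub_pos.2 hLα
    positivity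
  have hDx : 0 < √(D x) := Real.sqrt_pos.2 (by linarith [hD y])
  have hpl_sqrt : 2 * √(μ / 2) * √(D x) ≤ ‖g x‖ := by
    rw [← pow_le_pow_iff_left₀ (by positivity) hg.le two_ne_zero, mul_pow, mul_pow,
      Real.sq_sqrt (by positivity), Real.sq_sqrt (hD x)]
    have h := hpl x
    rw [one_div_mul_eq_div, le_div_iff₀ (by positivity)] at h
    simp only [D]
    linarith
  calc (1 - L * α) * √(μ / 2) * dist x y
      = α * (1 - L * α) * ‖g x‖ ^ 2 / (‖g x‖ / √(μ / 2)) := by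
        rw [hdist]; field_simp
    _ ≤ (D x - D y) / (2 * √(D x)) := by
        refine div_le_div₀ (hgain.le.trans hdesc) hdesc (by positivity) ?_
        rw [le_div_iff₀ (by positivity)]
        linarith
    _ ≤ √(D x) - √(D y) := Real.sub_div_two_sqrt_le_sqrt_sub_sqrt (hD y) (by linarith)

theorem pl_mul_infDist_le_sqrt_of_stepSize [CompleteSpace E]
    (hgrad : ∀ x, HasFDerivAt f (innerSL ℝ (g x)) x)
    {L μ : ℝ} (hL : 0 ≤ L) (hμ : 0 < μ) (hlip : ∀ x y, ‖g x - g y‖ ≤ L * ‖x - y‖)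
    (hpl : ∀ x, f x - (⨅ y, f y) ≤ 1 / (2 * μ) * ‖g x‖ ^ 2) (hbdd : BddBelow (Set.range f))
    (x : E) {α : ℝ} (hα : 0 < α) (hLα : L * α < 1) :
    (1 - L * α) * √(μ / 2) * infDist x {z | ∀ y, f z ≤ f y} ≤ √(f x - ⨅ y, f y) := by
  set X : ℕ → E := fun k => (fun p => p - α • g p)^[k] x
  have hX : ∀ k, X (k + 1) = X k - α • g (X k) := fun k => Function.iterate_succ_apply' _ k x
  have hc : 0 < (1 - L * α) * √(μ / 2) := mul_pos (sub_pos.2 hLα) (by positivity)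
  obtain ⟨a, hXa, hdist⟩ := exists_tendsto_mul_dist_le_of_mul_dist_succ_le hc
    (V := fun k => √(f (X k) - ⨅ y, f y)) (fun _ => Real.sqrt_nonneg _)
    (fun k => hX k ▸ pl_mul_dist_gradient_step_le hgrad hL hμ hlip hpl hbdd (X k) hα hLα)
  have hga : g a = 0 := by
    have hgX : Tendsto (fun k => g (X k)) atTop (𝓝 0) := by
      simpa [hX, hα.ne'] using (hXa.sub (hXa.comp (tendsto_add_atTop_nat 1))).const_smul α⁻¹
    have hcont : Continuous g := (LipschitzWith.of_dist_le' (K := L) fun x y => by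
      simpa only [dist_eq_norm] using hlip x y).continuous
    exact tendsto_nhds_unique ((hcont.tendsto a).comp hXa) hgX
  calc (1 - L * α) * √(μ / 2) * infDist x {z | ∀ y, f z ≤ f y}
      ≤ (1 - L * α) * √(μ / 2) * dist x a :=
        mul_le_mul_of_nonneg_left
          (infDist_le_dist_of_mem (pl_forall_le_of_gradient_eq_zero hpl hbdd hga)) hc.le
    _ ≤ √(f x - ⨅ y, f y) := hdist

theorem pl_quadratic_growth [CompleteSpace E]
    (hgrad : ∀ x, HasFDerivAt f (innerSL ℝ (g x)) x)
    {L μ : ℝ} (hL : 0 ≤ L) (hμ : 0 < μ) (hlip : ∀ x y, ‖g x - g y‖ ≤ L * ‖x - y‖)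
    (hpl : ∀ x, f x - (⨅ y, f y) ≤ 1 / (2 * μ) * ‖g x‖ ^ 2) (hbdd : BddBelow (Set.range f))
    (x : E) : μ / 2 * infDist x {z | ∀ y, f z ≤ f y} ^ 2 ≤ f x - ⨅ y, f y := by
  set d := infDist x {z | ∀ y, f z ≤ f y}
  have hsqrt : √(μ / 2) * d ≤ √(f x - ⨅ y, f y) := by
    have hlim : Tendsto (fun α => (1 - L * α) * (√(μ / 2) * d)) (𝓝[>] 0) (𝓝 (√(μ / 2) * d)) :=
      ((continuous_const.sub (continuous_const.mul continuous_id)).mul continuous_const).tendsto'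
        0 _ (by simp) |>.mono_left nhdsWithin_le_nhds
    refine le_of_tendsto hlim ?_
    filter_upwards [Ioo_mem_nhdsGT (show (0 : ℝ) < 1 / (L + 1) by positivity)] with α hα
    have hLα : L * α < 1 := by
      have := (lt_div_iff₀ (by positivity)).1 hα.2
      nlinarith [hα.1]
    rw [← mul_assoc]
    exact pl_mul_infDist_le_sqrt_of_stepSize hgrad hL hμ hlip hpl hbdd x hα.1 hLα
  have := (Real.le_sqrt (mul_nonneg (Real.sqrt_nonneg _) infDist_nonneg)
    (sub_nonneg.2 (ciInf_le hbdd x))).1 hsqrt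
  rwa [mul_pow, Real.sq_sqrt (by positivity)] at this

theorem pl_error_bound [CompleteSpace E]
    (hgrad : ∀ x, HasFDerivAt f (innerSL ℝ (g x)) x)
    {L μ : ℝ} (hL : 0 ≤ L) (hμ : 0 < μ) (hlip : ∀ x y, ‖g x - g y‖ ≤ L * ‖x - y‖)
    (hpl : ∀ x, f x - (⨅ y, f y) ≤ 1 / (2 * μ) * ‖g x‖ ^ 2) (hbdd : BddBelow (Set.range f))
    (x : E) : μ * infDist x {z | ∀ y, f z ≤ f y} ≤ ‖g x‖ := by
  have h := (pl_quadratic_growth hgrad hL hμ hlip hpl hbdd x).trans (hpl x)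
  rw [one_div_mul_eq_div, le_div_iff₀ (by positivity)] at h
  rw [← pow_le_pow_iff_left₀ (mul_nonneg hμ.le infDist_nonneg) (norm_nonneg _) two_ne_zero]
  linarith

end GradientDescent

/-- For an `L₂₀`-smooth `μ`-PL time-varying function whose gradient is
`L₁₁`-Lipschitz in time, the solution sets `X*(t) = argmin f(·;t)` are
Lipschitz in the Hausdorff distance: `d_H(X*(s), X*(t)) ≤ (L₁₁/μ)|s−t|`. -/
theorem pl_solution_sets_hausdorff_lipschitz
    (n : ℕ)
    (f : EuclideanSpace ℝ (Fin n) → ℝ → ℝ)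
    (g : EuclideanSpace ℝ (Fin n) → ℝ → EuclideanSpace ℝ (Fin n))
    (hgrad : ∀ (x : EuclideanSpace ℝ (Fin n)) (t : ℝ), 0 ≤ t →
      HasFDerivAt (fun y => f y t) (innerSL ℝ (g x t)) x)
    (μ L20 L11 : ℝ) (hμ : 0 < μ) (hL20 : 0 < L20) (hL11 : 0 ≤ L11)
    (hlipx : ∀ (x y : EuclideanSpace ℝ (Fin n)) (t : ℝ), 0 ≤ t →
      ‖g x t - g y t‖ ≤ L20 * ‖x - y‖)
    (hpl : ∀ (x : EuclideanSpace ℝ (Fin n)) (t : ℝ), 0 ≤ t →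
      f x t - (⨅ y, f y t) ≤ 1 / (2 * μ) * ‖g x t‖ ^ 2)
    (hne : ∀ t : ℝ, 0 ≤ t → {x | ∀ y, f x t ≤ f y t}.Nonempty)
    (hlipt : ∀ (x : EuclideanSpace ℝ (Fin n)) (s t : ℝ), 0 ≤ s → 0 ≤ t →
      ‖g x s - g x t‖ ≤ L11 * |s - t|) :
    ∀ s t : ℝ, 0 ≤ s → 0 ≤ t →
      Metric.hausdorffDist {x | ∀ y, f x s ≤ f y s} {x | ∀ y, f x t ≤ f y t}
        ≤ L11 / μ * |s - t| := by
  have hbdd : ∀ t, 0 ≤ t → BddBelow (Set.range fun y => f y t) := fun t ht =>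
    let ⟨x, hx⟩ := hne t ht
    ⟨f x t, Set.forall_mem_range.2 hx⟩
  have hside : ∀ s t, 0 ≤ s → 0 ≤ t → ∀ x ∈ {x | ∀ y, f x s ≤ f y s},
      infDist x {x | ∀ y, f x t ≤ f y t} ≤ L11 / μ * |s - t| := by
    intro s t hs ht x hx
    have hgx : g x s = 0 :=
      eq_zero_of_forall_le_of_hasFDerivAt_innerSL (f := fun y => f y s) hx (hgrad x s hs)
    rw [div_mul_eq_mul_div, le_div_iff₀' hμ]
    calc μ * infDist x {x | ∀ y, f x t ≤ f y t}
        ≤ ‖g x t‖ := pl_error_bound (fun y => hgrad y t ht) hL20.le hμ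
          (fun y z => hlipx y z t ht) (fun y => hpl y t ht) (hbdd t ht) x
      _ = ‖g x s - g x t‖ := by rw [hgx, zero_sub, norm_neg]
      _ ≤ L11 * |s - t| := hlipt x s t hs ht
  intro s t hs ht
  refine hausdorffDist_le_of_infDist (by positivity) (hside s t hs ht) fun x hx => ?_
  rw [abs_sub_comm]
  exact hside t s ht hs x hx
end

section
/- Let E be ℝⁿ, h > 0, t_k = k·h, and let f : E × ℝ → ℝ with f(·;t) differentiable for each t. Assume: (i) ‖∇_x f(x;t) − ∇_x f(y;t)‖ ≤ L·‖x − y‖ for all x,y,t with L > 0; (ii) f(·;t) is μ-PL on E for all t, i.e., (1/(2μ))‖∇_x f(x;t)‖² ≥ f(x;t) − f*(t) with f*(t) := inf_y f(y;t) and 0 < μ ≤ L; (iii) X*(t) := argmin_x f(x;t) is nonempty for all t; (iv) ‖∇_x f(x;s) − ∇_x f(x;t)‖ ≤ L_{1,1}|s − t| for all x,s,t. Fix α ∈ (0, 2/L), C ≥ 1, v ≥ 0, and set κ := L/μ, θ := 1 − αμ(2 − αL) ∈ [0,1). Let sequences (x̂_k), (x_k) in E satisfy, for every k ≥ 1: ‖x̂_k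 − x_{k−1}‖ ≤ v·h, and x_k = G_k^C(x̂_k) where G_k(y) := y − α∇_x f(y; t_k). Then for all k ≥ 2: dist(x̂_k, X*(t_k)) ≤ √(κ·θ^C)·dist(x̂_{k−1}, X*(t_{k−1})) + (v + L_{1,1}/μ)·h. -/
/-!
Write `d_t(x)` for the distance from `x` to the minimizer set `X*(t)` of `f(·; t)` and
`f(x; t) - f*(t)` for the optimality gap. The acceptance test moves `x̂_k` at most `vh` away from
`x_{k-1}`. Gradients vanish on `X*(t_{k-1})` and move by at most `L₁₁h` between `t_{k-1}` and
`t_k`, so the PL inequality in the form `d_t(x) ≤ ‖∇f(x; t)‖ / μ` puts `X*(t_{k-1})` within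
`L₁₁h/μ` of `X*(t_k)`. Finally, `C` gradient steps multiply the gap by at most `θ^C`; bounding
the gap above by `L`-smoothness, `f - f* ≤ (L/2) d²`, and below by quadratic growth,
`(μ/2) d² ≤ f - f*`, gives the factor `√(κ θ^C)`.

Quadratic growth is obtained by running gradient descent with a small step `β`: each step
decreases `√(f - f*)` by at least `(1 - βL/2) √(μ/2)` times its length, so the path has finite
length and converges to a minimizer; letting `β → 0` gives the constant `μ/2`.
-/

open Metric Filter Topology

section MetricLemmas

variable {X : Type*} [PseudoMetricSpace X]

theorem infDist_le_infDist_add_of_forall_infDist_le {s t : Set X} {r : ℝ} (hs : s.Nonempty)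
    (h : ∀ z ∈ s, infDist z t ≤ r) (x : X) : infDist x t ≤ infDist x s + r := by
  rw [← sub_le_iff_le_add]
  refine (le_infDist hs).2 fun z hz => ?_
  linarith [infDist_le_infDist_add_dist (x := x) (y := z) (s := t), h z hz]

theorem le_mul_infDist {s : Set X} {x : X} {a M : ℝ} (hM : 0 ≤ M) (hs : s.Nonempty)
    (h : ∀ z ∈ s, a ≤ M * dist x z) : a ≤ M * infDist x s := by
  rcases hM.eq_or_lt with rfl | hM
  · obtain ⟨z, hz⟩ := hs
    simpa using h z hz
  · rw [← div_le_iff₀' hM]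
    exact (le_infDist hs).2 fun z hz => (div_le_iff₀' hM).2 (h z hz)

theorem exists_tendsto_of_mul_dist_le_sub [CompleteSpace X] {y : ℕ → X} {s : ℕ → ℝ} {c : ℝ}
    (hc : 0 < c) (hs : ∀ n, 0 ≤ s n) (h : ∀ n, c * dist (y n) (y (n + 1)) ≤ s n - s (n + 1)) :
    ∃ z, Tendsto y atTop (𝓝 z) ∧ c * dist (y 0) z ≤ s 0 := by
  have hpartial : ∀ n, ∑ i ∈ Finset.range n, dist (y i) (y (i + 1)) ≤ s 0 / c := fun n =>
    calc ∑ i ∈ Finset.range n, dist (y i) (y (i + 1))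
        ≤ ∑ i ∈ Finset.range n, (s i - s (i + 1)) / c :=
          Finset.sum_le_sum fun i _ => (le_div_iff₀' hc).2 (h i)
      _ = (s 0 - s n) / c := by rw [← Finset.sum_div, Finset.sum_range_sub']
      _ ≤ s 0 / c := by gcongr; linarith [hs n]
  have hsum : Summable fun n => dist (y n) (y n.succ) :=
    summable_of_sum_range_le (fun _ => dist_nonneg) hpartial
  obtain ⟨z, hz⟩ := cauchySeq_tendsto_of_complete (cauchySeq_of_summable_dist hsum)
  refine ⟨z, hz, (le_div_iff₀' hc).1 ?_⟩
  exact (dist_le_tsum_dist_of_tendsto₀ hsum hz).trans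
    (Real.tsum_le_of_sum_range_le (fun _ => dist_nonneg) hpartial)

end MetricLemmas

def argminSet {X : Type*} (φ : X → ℝ) : Set X := {x | ∀ y, φ x ≤ φ y}

theorem iInf_eq_of_mem_argminSet {X : Type*} {φ : X → ℝ} {z : X} (hz : z ∈ argminSet φ) :
    ⨅ y, φ y = φ z :=
  have : Nonempty X := ⟨z⟩
  le_antisymm (ciInf_le ⟨φ z, Set.forall_mem_range.2 hz⟩ z) (le_ciInf hz)

-- `1 - αμ(2 - αL) ≥ (1 - αμ)²`
theorem one_sub_mul_mul_sub_nonneg {α μ L : ℝ} (hα : 0 ≤ α) (hμ : 0 ≤ μ) (hμL : μ ≤ L) :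
    0 ≤ 1 - α * μ * (2 - α * L) := by
  nlinarith [sq_nonneg (1 - α * μ),
    mul_le_mul_of_nonneg_left hμL (mul_nonneg (mul_nonneg hα hα) hμ)]

theorem mul_sqrt_mul_le_sqrt_sub_sqrt {a b k μ N : ℝ} (hμ : 0 < μ) (hk : 0 ≤ k) (hN : 0 ≤ N)
    (ha : 0 ≤ a) (hab : a ≤ b - k * N ^ 2) (hbN : 2 * μ * b ≤ N ^ 2) :
    k * √(μ / 2) * N ≤ √b - √a := by
  have hb : 0 ≤ b := by nlinarith
  set r := √(μ / 2)
  have hr : r ^ 2 = μ / 2 := Real.sq_sqrt (by positivity)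
  have hr0 : 0 ≤ r := Real.sqrt_nonneg _
  have hsa0 : 0 ≤ √a := Real.sqrt_nonneg _
  have hsab : 0 ≤ √b - √a := sub_nonneg.2 (Real.sqrt_le_sqrt (by nlinarith))
  have hrb : 2 * r * √b ≤ N := by
    refine le_of_pow_le_pow_left₀ two_ne_zero hN ?_
    rw [mul_pow, mul_pow, hr, Real.sq_sqrt hb]
    linarith
  have key : N * (k * r * N) ≤ N * (√b - √a) :=
    calc N * (k * r * N) = k * N ^ 2 * r := by ring
      _ ≤ (b - a) * r := by gcongr; linarith
      _ = (√b - √a) * (√b + √a) * r := by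
          linear_combination (-r) * Real.sq_sqrt hb + r * Real.sq_sqrt ha
      _ ≤ (√b - √a) * (2 * r * √b) := by nlinarith [mul_nonneg hsab hr0]
      _ ≤ (√b - √a) * N := by gcongr
      _ = N * (√b - √a) := mul_comm _ _
  rcases hN.eq_or_lt with rfl | hN
  · simpa using hsab
  · exact le_of_mul_le_mul_left key hN

variable {E : Type*} [NormedAddCommGroup E] [InnerProductSpace ℝ E]

theorem le_add_inner_add_half_mul_norm_sq {φ : E → ℝ} {G : E → E} {L : ℝ}
    (hgrad : ∀ x, HasFDerivAt φ (innerSL ℝ (G x)) x)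
    (hlip : ∀ x y, ‖G x - G y‖ ≤ L * ‖x - y‖) (x y : E) :
    φ y ≤ φ x + inner ℝ (G x) (y - x) + L / 2 * ‖y - x‖ ^ 2 := by
  set d := y - x
  -- the claim is `ψ 1 ≤ ψ 0`
  set ψ : ℝ → ℝ := fun s => φ (x + s • d) - s * inner ℝ (G x) d - L / 2 * s ^ 2 * ‖d‖ ^ 2
  have hψ : ∀ s, HasDerivAt ψ (inner ℝ (G (x + s • d) - G x) d - L * s * ‖d‖ ^ 2) s := by
    intro s
    have hline : HasDerivAt (fun s : ℝ => x + s • d) d s := by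
      simpa using ((hasDerivAt_id s).smul_const d).const_add x
    have := (((hgrad _).comp_hasDerivAt s hline).sub
      ((hasDerivAt_id s).mul_const (inner ℝ (G x) d))).sub
      (((hasDerivAt_pow 2 s).const_mul (L / 2)).mul_const (‖d‖ ^ 2))
    refine this.congr_deriv ?_
    simp only [innerSL_apply_apply, inner_sub_left]
    ring
  have hψ' : ∀ s ∈ interior (Set.Icc (0 : ℝ) 1), deriv ψ s ≤ 0 := by
    intro s hs
    rw [interior_Icc] at hs
    rw [(hψ s).deriv, sub_nonpos]
    calc inner ℝ (G (x + s • d) - G x) d ≤ ‖G (x + s • d) - G x‖ * ‖d‖ := real_inner_le_norm _ _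
      _ ≤ L * ‖s • d‖ * ‖d‖ := by
          gcongr
          simpa using hlip (x + s • d) x
      _ = L * s * ‖d‖ ^ 2 := by rw [norm_smul, Real.norm_of_nonneg hs.1.le]; ring
  have hanti : AntitoneOn ψ (Set.Icc 0 1) :=
    antitoneOn_of_deriv_nonpos (convex_Icc 0 1) (fun s _ => (hψ s).continuousAt.continuousWithinAt)
      (fun s _ => (hψ s).differentiableAt.differentiableWithinAt) hψ'
  have := hanti (by norm_num) (by norm_num) zero_le_one
  simp only [ψ, d, one_smul, zero_smul, add_zero, add_sub_cancel, one_pow, one_mul, zero_mul,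
    zero_pow two_ne_zero, mul_zero, sub_zero] at this
  linarith

theorem apply_sub_smul_le {φ : E → ℝ} {G : E → E} {L : ℝ}
    (hgrad : ∀ x, HasFDerivAt φ (innerSL ℝ (G x)) x)
    (hlip : ∀ x y, ‖G x - G y‖ ≤ L * ‖x - y‖) (x : E) (β : ℝ) :
    φ (x - β • G x) ≤ φ x - β * (1 - β * L / 2) * ‖G x‖ ^ 2 := by
  have := le_add_inner_add_half_mul_norm_sq hgrad hlip x (x - β • G x)
  rw [sub_sub_cancel_left, inner_neg_right, real_inner_smul_right, real_inner_self_eq_norm_sq,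
    norm_neg, norm_smul, Real.norm_eq_abs, mul_pow, sq_abs] at this
  linarith

theorem grad_eq_zero_of_mem_argminSet {φ : E → ℝ} {G : E → E} {z : E}
    (hgrad : HasFDerivAt φ (innerSL ℝ (G z)) z) (hz : z ∈ argminSet φ) : G z = 0 := by
  simpa using congrArg norm (IsLocalMin.hasFDerivAt_eq_zero (Eventually.of_forall hz) hgrad)

theorem sub_iInf_le_half_mul_dist_sq {φ : E → ℝ} {G : E → E} {L : ℝ}
    (hgrad : ∀ x, HasFDerivAt φ (innerSL ℝ (G x)) x)
    (hlip : ∀ x y, ‖G x - G y‖ ≤ L * ‖x - y‖) {z : E} (hz : z ∈ argminSet φ) (x : E) :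
    φ x - ⨅ y, φ y ≤ L / 2 * dist x z ^ 2 := by
  have := le_add_inner_add_half_mul_norm_sq hgrad hlip z x
  rw [grad_eq_zero_of_mem_argminSet (hgrad z) hz, inner_zero_left, add_zero] at this
  rw [iInf_eq_of_mem_argminSet hz, dist_eq_norm]
  linarith

def gradStep (G : E → E) (α : ℝ) (x : E) : E := x - α • G x

structure IsSmoothPL (φ : E → ℝ) (G : E → E) (μ L : ℝ) : Prop where
  hasFDerivAt : ∀ x, HasFDerivAt φ (innerSL ℝ (G x)) x
  lipschitz : ∀ x y, ‖G x - G y‖ ≤ L * ‖x - y‖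
  pos : 0 < μ
  pl : ∀ x, φ x - ⨅ y, φ y ≤ 1 / (2 * μ) * ‖G x‖ ^ 2
  nonempty_argminSet : (argminSet φ).Nonempty

namespace IsSmoothPL

variable {φ : E → ℝ} {G : E → E} {μ L : ℝ}

theorem sub_iInf_nonneg (hφ : IsSmoothPL φ G μ L) (x : E) : 0 ≤ φ x - ⨅ y, φ y := by
  obtain ⟨z, hz⟩ := hφ.nonempty_argminSet
  rw [iInf_eq_of_mem_argminSet hz, sub_nonneg]
  exact hz x

theorem two_mul_mul_sub_iInf_le (hφ : IsSmoothPL φ G μ L) (x : E) :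
    2 * μ * (φ x - ⨅ y, φ y) ≤ ‖G x‖ ^ 2 := by
  have := hφ.pl x
  rw [one_div_mul_eq_div, le_div_iff₀' (by linarith [hφ.pos])] at this
  exact this

theorem sub_iInf_gradStep_le (hφ : IsSmoothPL φ G μ L) {α : ℝ} (hα : 0 ≤ α) (hαL : α * L ≤ 2)
    (x : E) :
    φ (gradStep G α x) - ⨅ y, φ y ≤ (1 - α * μ * (2 - α * L)) * (φ x - ⨅ y, φ y) := by
  have hdesc := apply_sub_smul_le hφ.hasFDerivAt hφ.lipschitz x α
  rw [← gradStep] at hdesc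
  have hc : 0 ≤ α * (1 - α * L / 2) := mul_nonneg hα (by linarith)
  nlinarith [mul_le_mul_of_nonneg_left (hφ.two_mul_mul_sub_iInf_le x) hc]

theorem sub_iInf_iterate_gradStep_le (hφ : IsSmoothPL φ G μ L) (hμL : μ ≤ L) {α : ℝ} (hα : 0 ≤ α)
    (hαL : α * L ≤ 2) (x : E) (C : ℕ) :
    φ ((gradStep G α)^[C] x) - ⨅ y, φ y ≤ (1 - α * μ * (2 - α * L)) ^ C * (φ x - ⨅ y, φ y) := by
  have hθ := one_sub_mul_mul_sub_nonneg hα hφ.pos.le hμL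
  induction C with
  | zero => simp
  | succ C ih =>
    rw [Function.iterate_succ_apply', pow_succ', mul_assoc]
    exact (hφ.sub_iInf_gradStep_le hα hαL _).trans (mul_le_mul_of_nonneg_left ih hθ)

theorem mul_dist_gradStep_le_sqrt_sub_sqrt (hφ : IsSmoothPL φ G μ L) {β : ℝ} (hβ : 0 ≤ β)
    (hβL : β * L ≤ 2) (x : E) :
    (1 - β * L / 2) * √(μ / 2) * dist x (gradStep G β x)
      ≤ √(φ x - ⨅ y, φ y) - √(φ (gradStep G β x) - ⨅ y, φ y) := by
  have hdist : dist x (gradStep G β x) = β * ‖G x‖ := by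
    rw [gradStep, dist_eq_norm, sub_sub_cancel, norm_smul, Real.norm_of_nonneg hβ]
  have hdesc := apply_sub_smul_le hφ.hasFDerivAt hφ.lipschitz x β
  rw [← gradStep] at hdesc
  have h := mul_sqrt_mul_le_sqrt_sub_sqrt (k := β * (1 - β * L / 2)) hφ.pos
    (mul_nonneg hβ (by linarith)) (norm_nonneg _) (hφ.sub_iInf_nonneg (gradStep G β x))
    (by linarith) (hφ.two_mul_mul_sub_iInf_le x)
  rw [hdist]
  linarith

theorem mul_infDist_argminSet_le_sqrt_sub_iInf [CompleteSpace E] (hφ : IsSmoothPL φ G μ L)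
    {β : ℝ} (hβ : 0 < β) (hβL : β * L < 2) (x : E) :
    (1 - β * L / 2) * √(μ / 2) * infDist x (argminSet φ) ≤ √(φ x - ⨅ y, φ y) := by
  set y : ℕ → E := fun n => (gradStep G β)^[n] x
  have hc : 0 < (1 - β * L / 2) * √(μ / 2) :=
    mul_pos (by linarith) (Real.sqrt_pos.2 (half_pos hφ.pos))
  obtain ⟨z, hyz, hxz⟩ := exists_tendsto_of_mul_dist_le_sub (y := y)
    (s := fun n => √(φ (y n) - ⨅ y, φ y)) hc (fun _ => Real.sqrt_nonneg _) fun n => by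
      simpa only [y, Function.iterate_succ_apply'] using
        hφ.mul_dist_gradStep_le_sqrt_sub_sqrt hβ.le hβL.le (y n)
  -- the steps `y n - y (n + 1) = β • G (y n)` tend to `0`, so `G z = 0`,
  -- and then PL puts `z` in `argminSet φ`
  have hGz : G z = 0 := by
    have hGy : Tendsto (fun n => G (y n)) atTop (𝓝 (G z)) :=
      tendsto_iff_norm_sub_tendsto_zero.2 <| squeeze_zero (fun _ => norm_nonneg _)
        (fun n => hφ.lipschitz _ _)
        (by simpa using (tendsto_iff_norm_sub_tendsto_zero.1 hyz).const_mul L)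
    have hstep : ∀ n, G (y n) = β⁻¹ • (y n - y (n + 1)) := fun n => by
      simp only [y, Function.iterate_succ_apply', gradStep, sub_sub_cancel, smul_smul,
        inv_mul_cancel₀ hβ.ne', one_smul]
    have hGy0 : Tendsto (fun n => G (y n)) atTop (𝓝 0) := by
      simpa [hstep] using (hyz.sub (hyz.comp (tendsto_add_atTop_nat 1))).const_smul β⁻¹
    exact tendsto_nhds_unique hGy hGy0
  have hz : z ∈ argminSet φ := fun w => by
    have := hφ.pl z
    rw [hGz, norm_zero] at this
    linarith [hφ.sub_iInf_nonneg w]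
  calc (1 - β * L / 2) * √(μ / 2) * infDist x (argminSet φ)
      ≤ (1 - β * L / 2) * √(μ / 2) * dist x z := by gcongr; exact infDist_le_dist_of_mem hz
    _ ≤ √(φ x - ⨅ y, φ y) := hxz

theorem half_mul_infDist_argminSet_sq_le_sub_iInf [CompleteSpace E] (hφ : IsSmoothPL φ G μ L)
    (x : E) :
    μ / 2 * infDist x (argminSet φ) ^ 2 ≤ φ x - ⨅ y, φ y := by
  set D := √(μ / 2) * infDist x (argminSet φ)
  have hlim : Tendsto (fun β : ℝ => (1 - β * L / 2) * D) (𝓝[>] 0) (𝓝 D) :=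
    tendsto_nhdsWithin_of_tendsto_nhds <|
      (by fun_prop : Continuous fun β : ℝ => (1 - β * L / 2) * D).tendsto' 0 D (by simp)
  have hsmall : ∀ᶠ β in 𝓝[>] (0 : ℝ), β * L < 2 :=
    nhdsWithin_le_nhds <| (by fun_prop : Continuous fun β : ℝ => β * L).continuousAt.eventually_lt
      continuousAt_const (by simp)
  have hD : D ≤ √(φ x - ⨅ y, φ y) := le_of_tendsto hlim <| by
    filter_upwards [self_mem_nhdsWithin, hsmall] with β hβ hβL
    simpa only [D, mul_assoc] using hφ.mul_infDist_argminSet_le_sqrt_sub_iInf hβ hβL x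
  have := (Real.le_sqrt (mul_nonneg (Real.sqrt_nonneg _) infDist_nonneg)
    (hφ.sub_iInf_nonneg x)).1 hD
  rwa [mul_pow, Real.sq_sqrt (half_pos hφ.pos).le] at this

theorem infDist_argminSet_le_norm_div [CompleteSpace E] (hφ : IsSmoothPL φ G μ L) (x : E) :
    infDist x (argminSet φ) ≤ ‖G x‖ / μ := by
  have hqg := hφ.half_mul_infDist_argminSet_sq_le_sub_iInf x
  have hpl := hφ.two_mul_mul_sub_iInf_le x
  rw [le_div_iff₀ hφ.pos]
  refine le_of_pow_le_pow_left₀ two_ne_zero (norm_nonneg _) ?_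
  nlinarith [hφ.pos]

theorem infDist_iterate_gradStep_argminSet_le [CompleteSpace E] (hφ : IsSmoothPL φ G μ L)
    (hμL : μ ≤ L) {α : ℝ} (hα : 0 ≤ α) (hαL : α * L ≤ 2) (C : ℕ) (x : E) :
    infDist ((gradStep G α)^[C] x) (argminSet φ)
      ≤ √(L / μ * (1 - α * μ * (2 - α * L)) ^ C) * infDist x (argminSet φ) := by
  refine le_mul_infDist (Real.sqrt_nonneg _) hφ.nonempty_argminSet fun z hz => ?_
  rw [← Real.sqrt_sq dist_nonneg, ← Real.sqrt_mul' _ (sq_nonneg _), ← Real.sqrt_sq infDist_nonneg]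
  refine Real.sqrt_le_sqrt ?_
  have hqg := hφ.half_mul_infDist_argminSet_sq_le_sub_iInf ((gradStep G α)^[C] x)
  have hgap := hφ.sub_iInf_iterate_gradStep_le hμL hα hαL x C
  have hsmooth := sub_iInf_le_half_mul_dist_sq hφ.hasFDerivAt hφ.lipschitz hz x
  have hθ := pow_nonneg (one_sub_mul_mul_sub_nonneg hα hφ.pos.le hμL) C
  refine le_of_mul_le_mul_left ?_ (half_pos hφ.pos)
  calc μ / 2 * infDist ((gradStep G α)^[C] x) (argminSet φ) ^ 2
      ≤ (1 - α * μ * (2 - α * L)) ^ C * (φ x - ⨅ y, φ y) := hqg.trans hgap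
    _ ≤ (1 - α * μ * (2 - α * L)) ^ C * (L / 2 * dist x z ^ 2) := by gcongr
    _ = μ / 2 * (L / μ * (1 - α * μ * (2 - α * L)) ^ C * dist x z ^ 2) := by
        field_simp [hφ.pos.ne']

end IsSmoothPL

theorem infDist_argminSet_le_infDist_add [CompleteSpace E] {φ ψ : E → ℝ} {G H : E → E}
    {μ L δ : ℝ}
    (hφ : ∀ x, HasFDerivAt φ (innerSL ℝ (G x)) x) (hne : (argminSet φ).Nonempty)
    (hψ : IsSmoothPL ψ H μ L) (hGH : ∀ x, ‖G x - H x‖ ≤ δ) (x : E) :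
    infDist x (argminSet ψ) ≤ infDist x (argminSet φ) + δ / μ := by
  refine infDist_le_infDist_add_of_forall_infDist_le hne (fun z hz => ?_) x
  calc infDist z (argminSet ψ) ≤ ‖H z‖ / μ := hψ.infDist_argminSet_le_norm_div z
    _ = ‖G z - H z‖ / μ := by rw [grad_eq_zero_of_mem_argminSet (hφ z) hz, zero_sub, norm_neg]
    _ ≤ δ / μ := by gcongr; exacts [hψ.pos.le, hGH z]

theorem sharp_pl_distance_recursion_general
    (n : ℕ) (h : ℝ) (hh : 0 < h)
    (f : EuclideanSpace ℝ (Fin n) → ℝ → ℝ)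
    (g : EuclideanSpace ℝ (Fin n) → ℝ → EuclideanSpace ℝ (Fin n))
    (hgrad : ∀ (x : EuclideanSpace ℝ (Fin n)) (t : ℝ),
      HasFDerivAt (fun y => f y t) (innerSL ℝ (g x t)) x)
    (μ L L11 : ℝ) (hμ : 0 < μ) (hμL : μ ≤ L)
    (hlipx : ∀ (x y : EuclideanSpace ℝ (Fin n)) (t : ℝ),
      ‖g x t - g y t‖ ≤ L * ‖x - y‖)
    (hpl : ∀ (x : EuclideanSpace ℝ (Fin n)) (t : ℝ),
      f x t - (⨅ y, f y t) ≤ 1 / (2 * μ) * ‖g x t‖ ^ 2)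
    (hne : ∀ t : ℝ, {x | ∀ y, f x t ≤ f y t}.Nonempty)
    (hlipt : ∀ (x : EuclideanSpace ℝ (Fin n)) (s t : ℝ),
      ‖g x s - g x t‖ ≤ L11 * |s - t|)
    (α : ℝ) (hα0 : 0 < α) (hα2 : α < 2 / L)
    (C : ℕ) (v : ℝ)
    (xhat xc : ℕ → EuclideanSpace ℝ (Fin n))
    (hacc : ∀ k : ℕ, 1 ≤ k → ‖xhat k - xc (k - 1)‖ ≤ v * h)
    (hcorr : ∀ k : ℕ, 1 ≤ k →
      xc k = (fun y => y - α • g y ((k : ℝ) * h))^[C] (xhat k)) :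
    ∀ k : ℕ, 2 ≤ k →
      Metric.infDist (xhat k) {x | ∀ y, f x ((k : ℝ) * h) ≤ f y ((k : ℝ) * h)}
        ≤ Real.sqrt (L / μ * (1 - α * μ * (2 - α * L)) ^ C)
            * Metric.infDist (xhat (k - 1))
                {x | ∀ y, f x (((k - 1 : ℕ) : ℝ) * h) ≤ f y (((k - 1 : ℕ) : ℝ) * h)}
          + (v + L11 / μ) * h := by
  intro k hk
  have hsmooth : ∀ t, IsSmoothPL (fun x => f x t) (fun x => g x t) μ L := fun t =>
    ⟨fun x => hgrad x t, fun x y => hlipx x y t, hμ, fun x => hpl x t, hne t⟩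
  have hαL : α * L ≤ 2 := by
    have := (lt_div_iff₀ (hμ.trans_le hμL)).1 hα2
    linarith
  have hdt : |((k - 1 : ℕ) : ℝ) * h - k * h| = h := by
    rw [Nat.cast_sub (by omega), ← sub_mul, Nat.cast_one, sub_sub_cancel_left, neg_one_mul, abs_neg,
      abs_of_pos hh]
  have hmove : dist (xhat k) (xc (k - 1)) ≤ v * h :=
    (dist_eq_norm _ _).trans_le (hacc k (by omega))
  calc infDist (xhat k) (argminSet fun x => f x (k * h))
      ≤ infDist (xc (k - 1)) (argminSet fun x => f x (k * h)) + v * h :=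
        infDist_le_infDist_add_dist.trans (add_le_add_right hmove _)
    _ ≤ infDist (xc (k - 1)) (argminSet fun x => f x ((k - 1 : ℕ) * h)) + L11 * h / μ + v * h := by
        gcongr
        exact infDist_argminSet_le_infDist_add (fun x => hgrad x _) (hne _) (hsmooth _)
          (fun x => (hlipt x _ _).trans_eq (by rw [hdt])) _
    _ ≤ √(L / μ * (1 - α * μ * (2 - α * L)) ^ C)
            * infDist (xhat (k - 1)) (argminSet fun x => f x ((k - 1 : ℕ) * h))
          + L11 * h / μ + v * h := by
        rw [hcorr (k - 1) (by omega)]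
        gcongr
        exact (hsmooth _).infDist_iterate_gradStep_argminSet_le hμL hα0.le hαL C _
    _ = √(L / μ * (1 - α * μ * (2 - α * L)) ^ C)
            * infDist (xhat (k - 1)) (argminSet fun x => f x ((k - 1 : ℕ) * h))
          + (v + L11 / μ) * h := by ring

/-- One-round recursion for the SHARP tracking error under the PL condition:
`dist(x̂_k, X*(t_k)) ≤ √(κθ^C)·dist(x̂_{k−1}, X*(t_{k−1})) + (v + L₁₁/μ)h`,
where `κ = L/μ` and `θ = 1 − αμ(2 − αL)`. -/
theorem sharp_pl_distance_recursion
    (n : ℕ) (h : ℝ) (hh : 0 < h)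
    (f : EuclideanSpace ℝ (Fin n) → ℝ → ℝ)
    (g : EuclideanSpace ℝ (Fin n) → ℝ → EuclideanSpace ℝ (Fin n))
    (hgrad : ∀ (x : EuclideanSpace ℝ (Fin n)) (t : ℝ),
      HasFDerivAt (fun y => f y t) (innerSL ℝ (g x t)) x)
    (μ L L11 : ℝ) (hμ : 0 < μ) (hμL : μ ≤ L) (hL11 : 0 ≤ L11)
    (hlipx : ∀ (x y : EuclideanSpace ℝ (Fin n)) (t : ℝ),
      ‖g x t - g y t‖ ≤ L * ‖x - y‖)
    (hpl : ∀ (x : EuclideanSpace ℝ (Fin n)) (t : ℝ),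
      f x t - (⨅ y, f y t) ≤ 1 / (2 * μ) * ‖g x t‖ ^ 2)
    (hne : ∀ t : ℝ, {x | ∀ y, f x t ≤ f y t}.Nonempty)
    (hlipt : ∀ (x : EuclideanSpace ℝ (Fin n)) (s t : ℝ),
      ‖g x s - g x t‖ ≤ L11 * |s - t|)
    (α : ℝ) (hα0 : 0 < α) (hα2 : α < 2 / L)
    (C : ℕ) (hC : 1 ≤ C) (v : ℝ) (hv : 0 ≤ v)
    (xhat xc : ℕ → EuclideanSpace ℝ (Fin n))
    (hacc : ∀ k : ℕ, 1 ≤ k → ‖xhat k - xc (k - 1)‖ ≤ v * h)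
    (hcorr : ∀ k : ℕ, 1 ≤ k →
      xc k = (fun y => y - α • g y ((k : ℝ) * h))^[C] (xhat k)) :
    ∀ k : ℕ, 2 ≤ k →
      Metric.infDist (xhat k) {x | ∀ y, f x ((k : ℝ) * h) ≤ f y ((k : ℝ) * h)}
        ≤ Real.sqrt (L / μ * (1 - α * μ * (2 - α * L)) ^ C)
            * Metric.infDist (xhat (k - 1))
                {x | ∀ y, f x (((k - 1 : ℕ) : ℝ) * h) ≤ f y (((k - 1 : ℕ) : ℝ) * h)}
          + (v + L11 / μ) * h :=
  sharp_pl_distance_recursion_general n h hh f g hgrad μ L L11 hμ hμL hlipx hpl hne hlipt α hα0 hα2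
    C v xhat xc hacc hcorr
end
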